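/- arXiv:math/0611075 — 11 statements merged into one kernel-verified Lean document; each statement's English description precedes it below -/
import Mathlib

section
/- Fix real parameters a4, a5, a6, a7. If x ∈ ℝ^8 is a singular configuration of the subsystem 4567 (i.e. Q(x) = 0 and the 6×8 Jacobian matrix of Q at x has rank strictly less than 6), then the product t1·t2·t3·t4·t5·t6·t7·t8 = 0, where t1 = a4-a5-a6-a7, t2 = a4-a5+a6+a7, t3 = a4+a5+a6+a7, t4 = a4+a5-a6-a7, t5 = a4-a5+a6-a7, t6 = a4-a5-a6+a7, t7 = a4+a5-a6+a7, t8 = a4+a5+a6-a7. -/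
/-- The Jacobian matrix of a map `f : ℝ^n → ℝ^m` at a point `x`,
whose `(i, j)` entry is the partial derivative of the `i`-th component of `f`
with respect to the `j`-th variable. -/
noncomputable def jacobian {n m : ℕ} (f : (Fin n → ℝ) → Fin m → ℝ) (x : Fin n → ℝ) :
    Matrix (Fin m) (Fin n) ℝ :=
  Matrix.of fun i j => fderiv ℝ (fun y => f y i) x (Pi.single j 1)

/-- The constraint map `Q : ℝ^8 → ℝ^6` of the subsystem 4567, in the variables
`(c4, s4, c5, s5, c6, s6, c7, s7)`. -/
noncomputable def Q4567 (a4 a5 a6 a7 : ℝ) (x : Fin 8 → ℝ) : Fin 6 → ℝ :=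
  ![a4 * (x 1 * x 2 + x 0 * x 3) + a5 * x 2 - a6 * (x 4 * x 6 - x 5 * x 7) - a7 * x 7,
    a4 * (x 0 * x 2 - x 1 * x 3) - a5 * x 3 + a6 * (x 5 * x 6 + x 4 * x 7) - a7 * x 6,
    x 0 ^ 2 + x 1 ^ 2 - 1,
    x 2 ^ 2 + x 3 ^ 2 - 1,
    x 4 ^ 2 + x 5 ^ 2 - 1,
    x 6 ^ 2 + x 7 ^ 2 - 1]

/-!
The first two components of `Q` say that four planar vectors `a₄ w₄, …, a₇ w₇`, with unit
directions `w_k` determined by the angles, close up into a loop. A nonzero left null vector `μ`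
of the Jacobian cannot vanish on the two loop rows, because the gradients of the four circle
constraints are independent on the torus. Pairing `μ` with the derivative along each angle shows
that `(μ₀, μ₁)` is orthogonal to the rotated direction of every link, i.e. every link is parallel
to `(μ₀, μ₁)`; hence `⟪(μ₀, μ₁), a_k w_k⟫ = ± a_k ‖(μ₀, μ₁)‖`. Pairing `μ` with the loop equation
then gives `± a₄ ± a₅ ± a₆ ± a₇ = 0`, which is one of the eight factors.
-/

open Matrix

theorem Matrix.exists_vecMul_eq_zero_of_rank_lt {K m n : Type*} [Field K] [Fintype m]
    [Fintype n] (M : Matrix m n K) (h : M.rank < Fintype.card m) : ∃ v ≠ 0, v ᵥ* M = 0 := by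
  have hdep : ¬LinearIndependent K M.row := fun hM => h.ne hM.rank_matrix
  obtain ⟨v, hv, i, hi⟩ := Fintype.not_linearIndependent_iff.1 hdep
  exact ⟨v, fun h0 => hi (congrFun h0 i), by rwa [vecMul_eq_sum]⟩

theorem sq_mul_dot_eq_of_mul_cross_eq_zero {R : Type*} [CommRing R] {a m₀ m₁ p q : R}
    (hpq : p ^ 2 + q ^ 2 = 1) (h : a * (m₀ * q - m₁ * p) = 0) :
    (a * (m₀ * p + m₁ * q)) ^ 2 = a ^ 2 * (m₀ ^ 2 + m₁ ^ 2) := by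
  linear_combination a ^ 2 * (m₀ ^ 2 + m₁ ^ 2) * hpq - a * (m₀ * q - m₁ * p) * h

def signedSumProduct {R : Type*} [CommRing R] (a b c d : R) : R :=
  (a - b - c - d) * (a - b + c + d) * (a + b + c + d) * (a + b - c - d) *
    (a - b + c - d) * (a - b - c + d) * (a + b - c + d) * (a + b + c - d)

-- Pair the factors that differ in the sign of `b`, then of `d`, then of `c`.
theorem signedSumProduct_eq {R : Type*} [CommRing R] (a b c d : R) :
    signedSumProduct a b c d =
      ((a ^ 2 + c ^ 2 + d ^ 2 - b ^ 2) ^ 2 + 4 * a ^ 2 * c ^ 2 - 4 * (a ^ 2 + c ^ 2) * d ^ 2) ^ 2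
        - 16 * a ^ 2 * c ^ 2 * (a ^ 2 + c ^ 2 - b ^ 2 - d ^ 2) ^ 2 := by
  unfold signedSumProduct
  ring

theorem signedSumProduct_eq_zero_of_sq_eq {R : Type*} [CommRing R] [IsDomain R]
    {a b c d e f g h N : R} (hN : N ≠ 0) (he : e ^ 2 = a ^ 2 * N) (hf : f ^ 2 = b ^ 2 * N)
    (hg : g ^ 2 = c ^ 2 * N) (hh : h ^ 2 = d ^ 2 * N) (hsum : e + f + g + h = 0) :
    signedSumProduct a b c d = 0 := by
  have hscale : signedSumProduct e f g h = N ^ 4 * signedSumProduct a b c d := by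
    rw [signedSumProduct_eq, signedSumProduct_eq, he, hf, hg, hh]
    ring
  have hzero : signedSumProduct e f g h = 0 := by
    simp only [signedSumProduct, hsum, mul_zero, zero_mul]
  exact (mul_eq_zero.1 (hscale ▸ hzero)).resolve_left (pow_ne_zero 4 hN)

theorem jacobian_Q4567 (a4 a5 a6 a7 : ℝ) (x : Fin 8 → ℝ) :
    jacobian (Q4567 a4 a5 a6 a7) x = !![
    a4 * x 3, a4 * x 2, a4 * x 1 + a5, a4 * x 0, -(a6 * x 6), a6 * x 7, -(a6 * x 4), a6 * x 5 - a7;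
    a4 * x 2, -(a4 * x 3), a4 * x 0, -(a4 * x 1) - a5, a6 * x 7, a6 * x 6, a6 * x 5 - a7, a6 * x 4;
    2 * x 0, 2 * x 1, 0, 0, 0, 0, 0, 0;
    0, 0, 2 * x 2, 2 * x 3, 0, 0, 0, 0;
    0, 0, 0, 0, 2 * x 4, 2 * x 5, 0, 0;
    0, 0, 0, 0, 0, 0, 2 * x 6, 2 * x 7] := by
  ext i j
  fin_cases i <;>
    simp (disch := fun_prop) only [jacobian, Q4567, of_apply, Fin.reduceFinMk, cons_val,
      (hasFDerivAt_apply _ x).fderiv, fderiv_fun_add, fderiv_fun_sub, fderiv_const_mul,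
      fderiv_fun_mul, fderiv_fun_pow, fderiv_const_apply] <;>
    fin_cases j <;> simp

theorem eq_zero_of_vecMul_jacobian_Q4567_eq_zero {a4 a5 a6 a7 : ℝ} {x : Fin 8 → ℝ}
    {μ : Fin 6 → ℝ} (hQ : Q4567 a4 a5 a6 a7 x = 0) (hker : μ ᵥ* jacobian (Q4567 a4 a5 a6 a7) x = 0)
    (hμ0 : μ 0 = 0) (hμ1 : μ 1 = 0) : μ = 0 := by
  rw [jacobian_Q4567] at hker
  simp only [Q4567, funext_iff, Fin.forall_fin_succ, vecMul, dotProduct, Fin.sum_univ_six,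
    of_apply, cons_val, cons_val_succ, cons_val_fin_one, Pi.zero_apply, forall_const] at hQ hker
  obtain ⟨-, -, h4, h5, h6, h7⟩ := hQ
  obtain ⟨k0, k1, k2, k3, k4, k5, k6, k7⟩ := hker
  rw [hμ0, hμ1] at k0 k1 k2 k3 k4 k5 k6 k7
  have hμ2 : μ 2 = 0 := by linear_combination x 0 / 2 * k0 + x 1 / 2 * k1 - μ 2 * h4
  have hμ3 : μ 3 = 0 := by linear_combination x 2 / 2 * k2 + x 3 / 2 * k3 - μ 3 * h5
  have hμ4 : μ 4 = 0 := by linear_combination x 4 / 2 * k4 + x 5 / 2 * k5 - μ 4 * h6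
  have hμ5 : μ 5 = 0 := by linear_combination x 6 / 2 * k6 + x 7 / 2 * k7 - μ 5 * h7
  ext i
  fin_cases i <;> assumption

/-- If `x` is a singular configuration of the subsystem 4567, then the product
`t1*t2*t3*t4*t5*t6*t7*t8` of the eight linear forms vanishes. -/
theorem singular4567_product_eq_zero (a4 a5 a6 a7 : ℝ) (x : Fin 8 → ℝ)
    (hQ : Q4567 a4 a5 a6 a7 x = 0)
    (hrank : (jacobian (Q4567 a4 a5 a6 a7) x).rank < 6) :
    (a4 - a5 - a6 - a7) * (a4 - a5 + a6 + a7) * (a4 + a5 + a6 + a7) * (a4 + a5 - a6 - a7) *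
      (a4 - a5 + a6 - a7) * (a4 - a5 - a6 + a7) * (a4 + a5 - a6 + a7) * (a4 + a5 + a6 - a7)
      = 0 := by
  obtain ⟨μ, hμ, hker⟩ := (jacobian (Q4567 a4 a5 a6 a7) x).exists_vecMul_eq_zero_of_rank_lt hrank
  have hN : μ 0 ^ 2 + μ 1 ^ 2 ≠ 0 := fun h0 =>
    hμ (eq_zero_of_vecMul_jacobian_Q4567_eq_zero hQ hker (by nlinarith) (by nlinarith))
  rw [jacobian_Q4567] at hker
  simp only [Q4567, funext_iff, Fin.forall_fin_succ, vecMul, dotProduct, Fin.sum_univ_six,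
    of_apply, cons_val, cons_val_succ, cons_val_fin_one, Pi.zero_apply, forall_const] at hQ hker
  obtain ⟨q1, q2, h4, h5, h6, h7⟩ := hQ
  obtain ⟨k0, k1, k2, k3, k4, k5, k6, k7⟩ := hker
  -- `e, f, g, h` are `a_k ⟪(μ 0, μ 1), w_k⟫` for the unit direction `w_k` of the `k`-th link
  refine signedSumProduct_eq_zero_of_sq_eq hN
    (e := a4 * (μ 0 * (x 1 * x 2 + x 0 * x 3) + μ 1 * (x 0 * x 2 - x 1 * x 3)))
    (f := a5 * (μ 0 * x 2 + μ 1 * -x 3))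
    (g := a6 * (μ 0 * -(x 4 * x 6 - x 5 * x 7) + μ 1 * (x 5 * x 6 + x 4 * x 7)))
    (h := a7 * (μ 0 * -x 7 + μ 1 * -x 6)) ?_ ?_ ?_ ?_ (by linear_combination μ 0 * q1 + μ 1 * q2)
  · exact sq_mul_dot_eq_of_mul_cross_eq_zero (by linear_combination (x 2 ^ 2 + x 3 ^ 2) * h4 + h5)
      (by linear_combination x 0 * k1 - x 1 * k0)
  · exact sq_mul_dot_eq_of_mul_cross_eq_zero (by linear_combination h5)
      (by linear_combination x 2 * k3 - x 3 * k2 + x 1 * k0 - x 0 * k1)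
  · exact sq_mul_dot_eq_of_mul_cross_eq_zero (by linear_combination (x 6 ^ 2 + x 7 ^ 2) * h6 + h7)
      (by linear_combination x 4 * k5 - x 5 * k4)
  · exact sq_mul_dot_eq_of_mul_cross_eq_zero (by linear_combination h7)
      (by linear_combination x 6 * k7 - x 7 * k6 + x 5 * k4 - x 4 * k5)
end

section
/- Fix real parameters a4, a5, a6, a7. If x = (c4, s4, c5, s5, c6, s6, c7, s7) ∈ ℝ^8 is a singular configuration of the subsystem 4567 (i.e. Q(x) = 0 and the 6×8 Jacobian matrix of Q at x has rank strictly less than 6), then a4·a5·c4 = 0 and a6·a7·c6 = 0. -/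
/-- Projection onto the `i`-th coordinate of `ℝ^8`, as a continuous linear map. -/
noncomputable def prj (i : Fin 8) : (Fin 8 → ℝ) →L[ℝ] ℝ := ContinuousLinearMap.proj i

open Matrix in
lemma exists_left_kernel {M : Matrix (Fin 6) (Fin 8) ℝ} (h : M.rank < 6) :
    ∃ v : Fin 6 → ℝ, v ≠ 0 ∧ v ᵥ* M = 0 := by
  have h' : Mᵀ.rank < 6 := by rwa [Matrix.rank_transpose]
  have hrk := LinearMap.finrank_range_add_finrank_ker (Mᵀ.mulVecLin)
  have hfin : Module.finrank ℝ (Fin 6 → ℝ) = 6 := by simp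
  rw [hfin] at hrk
  have hrank_eq : Mᵀ.rank = Module.finrank ℝ (LinearMap.range Mᵀ.mulVecLin) := rfl
  have hker : LinearMap.ker (Mᵀ.mulVecLin) ≠ ⊥ := by
    intro hk
    rw [hk] at hrk
    simp [finrank_bot] at hrk
    omega
  obtain ⟨v, hv, hvne⟩ := (Submodule.ne_bot_iff _).mp hker
  refine ⟨v, hvne, ?_⟩
  have hv2 := LinearMap.mem_ker.mp hv
  simpa [Matrix.mulVecLin_apply, Matrix.mulVec_transpose] using hv2

set_option maxHeartbeats 2000000 in
/-- At every singular configuration of the subsystem 4567 one has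
`a4*a5*c4 = 0` and `a6*a7*c6 = 0`. -/
theorem singular4567_c4_c6 (a4 a5 a6 a7 c4 s4 c5 s5 c6 s6 c7 s7 : ℝ)
    (hQ : Q4567 a4 a5 a6 a7 ![c4, s4, c5, s5, c6, s6, c7, s7] = 0)
    (hrank : (jacobian (Q4567 a4 a5 a6 a7) ![c4, s4, c5, s5, c6, s6, c7, s7]).rank < 6) :
    a4 * a5 * c4 = 0 ∧ a6 * a7 * c6 = 0 := by
  have hc4 : c4 ^ 2 + s4 ^ 2 - 1 = 0 := by simpa [Q4567] using congrFun hQ 2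
  have hc5 : c5 ^ 2 + s5 ^ 2 - 1 = 0 := by simpa [Q4567] using congrFun hQ 3
  have hc6 : c6 ^ 2 + s6 ^ 2 - 1 = 0 := by simpa [Q4567] using congrFun hQ 4
  have hc7 : c7 ^ 2 + s7 ^ 2 - 1 = 0 := by simpa [Q4567] using congrFun hQ 5
  set xv : Fin 8 → ℝ := ![c4, s4, c5, s5, c6, s6, c7, s7] with hxv
  have P : ∀ i : Fin 8, HasFDerivAt (fun y : Fin 8 → ℝ => y i) (prj i) xv :=
    fun i => hasFDerivAt_apply (𝕜 := ℝ) i xv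
  have H0 : HasFDerivAt (fun y : Fin 8 → ℝ => Q4567 a4 a5 a6 a7 y 0)
      (a4 • ((s4 • prj 2 + c5 • prj 1) + (c4 • prj 3 + s5 • prj 0)) + a5 • prj 2
        - a6 • ((c6 • prj 6 + c7 • prj 4) - (s6 • prj 7 + s7 • prj 5)) - a7 • prj 7) xv := by
    exact ((((((P 1).mul (P 2)).add ((P 0).mul (P 3))).const_mul a4).add
      ((P 2).const_mul a5)).sub
      ((((P 4).mul (P 6)).sub ((P 5).mul (P 7))).const_mul a6)).sub ((P 7).const_mul a7)
  have H1 : HasFDerivAt (fun y : Fin 8 → ℝ => Q4567 a4 a5 a6 a7 y 1)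
      (a4 • ((c4 • prj 2 + c5 • prj 0) - (s4 • prj 3 + s5 • prj 1)) - a5 • prj 3
        + a6 • ((s6 • prj 6 + c7 • prj 5) + (c6 • prj 7 + s7 • prj 4)) - a7 • prj 6) xv := by
    exact ((((((P 0).mul (P 2)).sub ((P 1).mul (P 3))).const_mul a4).sub
      ((P 3).const_mul a5)).add
      ((((P 5).mul (P 6)).add ((P 4).mul (P 7))).const_mul a6)).sub ((P 6).const_mul a7)
  have H2 : HasFDerivAt (fun y : Fin 8 → ℝ => Q4567 a4 a5 a6 a7 y 2)
      ((c4 • prj 0 + c4 • prj 0) + (s4 • prj 1 + s4 • prj 1)) xv := by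
    refine HasFDerivAt.congr_of_eventuallyEq
      ((((P 0).mul (P 0)).add ((P 1).mul (P 1))).sub_const (1:ℝ))
      (Filter.Eventually.of_forall fun y => ?_)
    show y 0 ^ 2 + y 1 ^ 2 - 1 = y 0 * y 0 + y 1 * y 1 - 1
    ring
  have H3 : HasFDerivAt (fun y : Fin 8 → ℝ => Q4567 a4 a5 a6 a7 y 3)
      ((c5 • prj 2 + c5 • prj 2) + (s5 • prj 3 + s5 • prj 3)) xv := by
    refine HasFDerivAt.congr_of_eventuallyEq
      ((((P 2).mul (P 2)).add ((P 3).mul (P 3))).sub_const (1:ℝ))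
      (Filter.Eventually.of_forall fun y => ?_)
    show y 2 ^ 2 + y 3 ^ 2 - 1 = y 2 * y 2 + y 3 * y 3 - 1
    ring
  have H4 : HasFDerivAt (fun y : Fin 8 → ℝ => Q4567 a4 a5 a6 a7 y 4)
      ((c6 • prj 4 + c6 • prj 4) + (s6 • prj 5 + s6 • prj 5)) xv := by
    refine HasFDerivAt.congr_of_eventuallyEq
      ((((P 4).mul (P 4)).add ((P 5).mul (P 5))).sub_const (1:ℝ))
      (Filter.Eventually.of_forall fun y => ?_)
    show y 4 ^ 2 + y 5 ^ 2 - 1 = y 4 * y 4 + y 5 * y 5 - 1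
    ring
  have H5 : HasFDerivAt (fun y : Fin 8 → ℝ => Q4567 a4 a5 a6 a7 y 5)
      ((c7 • prj 6 + c7 • prj 6) + (s7 • prj 7 + s7 • prj 7)) xv := by
    refine HasFDerivAt.congr_of_eventuallyEq
      ((((P 6).mul (P 6)).add ((P 7).mul (P 7))).sub_const (1:ℝ))
      (Filter.Eventually.of_forall fun y => ?_)
    show y 6 ^ 2 + y 7 ^ 2 - 1 = y 6 * y 6 + y 7 * y 7 - 1
    ring
  have j0 : ∀ j : Fin 8, jacobian (Q4567 a4 a5 a6 a7) xv 0 j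
      = (a4 • ((s4 • prj 2 + c5 • prj 1) + (c4 • prj 3 + s5 • prj 0)) + a5 • prj 2
        - a6 • ((c6 • prj 6 + c7 • prj 4) - (s6 • prj 7 + s7 • prj 5)) - a7 • prj 7)
        (Pi.single j 1) := fun j => by
    show fderiv ℝ (fun y : Fin 8 → ℝ => Q4567 a4 a5 a6 a7 y 0) xv (Pi.single j 1) = _
    rw [H0.fderiv]
  have j1 : ∀ j : Fin 8, jacobian (Q4567 a4 a5 a6 a7) xv 1 j
      = (a4 • ((c4 • prj 2 + c5 • prj 0) - (s4 • prj 3 + s5 • prj 1)) - a5 • prj 3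
        + a6 • ((s6 • prj 6 + c7 • prj 5) + (c6 • prj 7 + s7 • prj 4)) - a7 • prj 6)
        (Pi.single j 1) := fun j => by
    show fderiv ℝ (fun y : Fin 8 → ℝ => Q4567 a4 a5 a6 a7 y 1) xv (Pi.single j 1) = _
    rw [H1.fderiv]
  have j2 : ∀ j : Fin 8, jacobian (Q4567 a4 a5 a6 a7) xv 2 j
      = ((c4 • prj 0 + c4 • prj 0) + (s4 • prj 1 + s4 • prj 1)) (Pi.single j 1) := fun j => by
    show fderiv ℝ (fun y : Fin 8 → ℝ => Q4567 a4 a5 a6 a7 y 2) xv (Pi.single j 1) = _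
    rw [H2.fderiv]
  have j3 : ∀ j : Fin 8, jacobian (Q4567 a4 a5 a6 a7) xv 3 j
      = ((c5 • prj 2 + c5 • prj 2) + (s5 • prj 3 + s5 • prj 3)) (Pi.single j 1) := fun j => by
    show fderiv ℝ (fun y : Fin 8 → ℝ => Q4567 a4 a5 a6 a7 y 3) xv (Pi.single j 1) = _
    rw [H3.fderiv]
  have j4 : ∀ j : Fin 8, jacobian (Q4567 a4 a5 a6 a7) xv 4 j
      = ((c6 • prj 4 + c6 • prj 4) + (s6 • prj 5 + s6 • prj 5)) (Pi.single j 1) := fun j => by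
    show fderiv ℝ (fun y : Fin 8 → ℝ => Q4567 a4 a5 a6 a7 y 4) xv (Pi.single j 1) = _
    rw [H4.fderiv]
  have j5 : ∀ j : Fin 8, jacobian (Q4567 a4 a5 a6 a7) xv 5 j
      = ((c7 • prj 6 + c7 • prj 6) + (s7 • prj 7 + s7 • prj 7)) (Pi.single j 1) := fun j => by
    show fderiv ℝ (fun y : Fin 8 → ℝ => Q4567 a4 a5 a6 a7 y 5) xv (Pi.single j 1) = _
    rw [H5.fderiv]
  obtain ⟨v, hvne, hv⟩ := exists_left_kernel hrank
  have hvj : ∀ j : Fin 8,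
      v 0 * jacobian (Q4567 a4 a5 a6 a7) xv 0 j + v 1 * jacobian (Q4567 a4 a5 a6 a7) xv 1 j
      + v 2 * jacobian (Q4567 a4 a5 a6 a7) xv 2 j + v 3 * jacobian (Q4567 a4 a5 a6 a7) xv 3 j
      + v 4 * jacobian (Q4567 a4 a5 a6 a7) xv 4 j + v 5 * jacobian (Q4567 a4 a5 a6 a7) xv 5 j
      = 0 := by
    intro j
    have h := congrFun hv j
    simp only [Matrix.vecMul, dotProduct, Fin.sum_univ_six, Pi.zero_apply] at h
    linear_combination h
  have e0 : a4 * s5 * v 0 + a4 * c5 * v 1 + 2 * c4 * v 2 = 0 := by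
    have h := hvj 0
    rw [j0, j1, j2, j3, j4, j5] at h
    simp [prj, Pi.single_apply] at h
    linear_combination h
  have e1 : a4 * c5 * v 0 - a4 * s5 * v 1 + 2 * s4 * v 2 = 0 := by
    have h := hvj 1
    rw [j0, j1, j2, j3, j4, j5] at h
    simp [prj, Pi.single_apply] at h
    linear_combination h
  have e2 : (a4 * s4 + a5) * v 0 + a4 * c4 * v 1 + 2 * c5 * v 3 = 0 := by
    have h := hvj 2
    rw [j0, j1, j2, j3, j4, j5] at h
    simp [prj, Pi.single_apply] at h
    linear_combination h
  have e3 : a4 * c4 * v 0 - (a4 * s4 + a5) * v 1 + 2 * s5 * v 3 = 0 := by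
    have h := hvj 3
    rw [j0, j1, j2, j3, j4, j5] at h
    simp [prj, Pi.single_apply] at h
    linear_combination h
  have e4 : -(a6 * c7) * v 0 + a6 * s7 * v 1 + 2 * c6 * v 4 = 0 := by
    have h := hvj 4
    rw [j0, j1, j2, j3, j4, j5] at h
    simp [prj, Pi.single_apply] at h
    linear_combination h
  have e5 : a6 * s7 * v 0 + a6 * c7 * v 1 + 2 * s6 * v 4 = 0 := by
    have h := hvj 5
    rw [j0, j1, j2, j3, j4, j5] at h
    simp [prj, Pi.single_apply] at h
    linear_combination h
  have e6 : -(a6 * c6) * v 0 + (a6 * s6 - a7) * v 1 + 2 * c7 * v 5 = 0 := by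
    have h := hvj 6
    rw [j0, j1, j2, j3, j4, j5] at h
    simp [prj, Pi.single_apply] at h
    linear_combination h
  have e7 : (a6 * s6 - a7) * v 0 + a6 * c6 * v 1 + 2 * s7 * v 5 = 0 := by
    have h := hvj 7
    rw [j0, j1, j2, j3, j4, j5] at h
    simp [prj, Pi.single_apply] at h
    linear_combination h
  by_cases h0 : v 0 = 0 ∧ v 1 = 0
  · exfalso
    obtain ⟨hu, hw⟩ := h0
    rw [hu, hw] at e0 e1 e2 e3 e4 e5 e6 e7
    have hm4 : v 2 = 0 := by linear_combination (c4/2) * e0 + (s4/2) * e1 - v 2 * hc4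
    have hm5 : v 3 = 0 := by linear_combination (c5/2) * e2 + (s5/2) * e3 - v 3 * hc5
    have hm6 : v 4 = 0 := by linear_combination (c6/2) * e4 + (s6/2) * e5 - v 4 * hc6
    have hm7 : v 5 = 0 := by linear_combination (c7/2) * e6 + (s7/2) * e7 - v 5 * hc7
    apply hvne
    funext i
    fin_cases i
    exacts [hu, hw, hm4, hm5, hm6, hm7]
  · have hne : v 0 ^ 2 + v 1 ^ 2 ≠ 0 := by
      intro hz
      apply h0
      constructor <;> nlinarith [sq_nonneg (v 0), sq_nonneg (v 1)]
    have h1 : a4 * (v 1 * (s4 * c5 + c4 * s5) - v 0 * (c4 * c5 - s4 * s5)) = 0 := by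
      linear_combination s4 * e0 - c4 * e1
    have h2 : v 0 * (a5 * s5 - a4 * (c4 * c5 - s4 * s5))
        + v 1 * (a4 * (s4 * c5 + c4 * s5) + a5 * c5) = 0 := by
      linear_combination s5 * e2 - c5 * e3
    have h3 : a6 * (v 0 * (s6 * c7 + c6 * s7) + v 1 * (c6 * c7 - s6 * s7)) = 0 := by
      linear_combination c6 * e5 - s6 * e4
    have h4 : v 0 * (a6 * (s6 * c7 + c6 * s7) - a7 * c7)
        + v 1 * (a6 * (c6 * c7 - s6 * s7) + a7 * s7) = 0 := by
      linear_combination c7 * e7 - s7 * e6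
    have hX : a4 * a5 * c4 * (v 0 ^ 2 + v 1 ^ 2) = 0 := by
      linear_combination
        (-(v 1) * (a4 * (c4 * c5 - s4 * s5) - a5 * s5)
          - v 0 * (a4 * (s4 * c5 + c4 * s5) + a5 * c5)) * h1
        - (-(v 1) * (a4 * (c4 * c5 - s4 * s5)) - v 0 * (a4 * (s4 * c5 + c4 * s5))) * h2
        - (a4 * a5 * c4 * (v 0 ^ 2 + v 1 ^ 2)) * hc5
    have hY : a6 * a7 * c6 * (v 0 ^ 2 + v 1 ^ 2) = 0 := by
      linear_combination
        (-(v 1) * (a6 * (s6 * c7 + c6 * s7) - a7 * c7)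
          + v 0 * (a6 * (c6 * c7 - s6 * s7) + a7 * s7)) * h3
        - (-(v 1) * (a6 * (s6 * c7 + c6 * s7)) + v 0 * (a6 * (c6 * c7 - s6 * s7))) * h4
        - (a6 * a7 * c6 * (v 0 ^ 2 + v 1 ^ 2)) * hc7
    exact ⟨(mul_eq_zero.mp hX).resolve_right hne, (mul_eq_zero.mp hY).resolve_right hne⟩
end

section
/- Fix real parameters a4, a5, a6, a7 with a4 > 0, a5 > 0, a6 > 0, a7 > 0. If x = (c4, s4, c5, s5, c6, s6, c7, s7) ∈ ℝ^8 is a singular configuration of the subsystem 4567 (i.e. Q(x) = 0 and the 6×8 Jacobian of Q at x has rank < 6), then c4 = 0, c6 = 0, s4^2 = 1, s6^2 = 1, either (c5 = s7 and s5 = -c7) or (c5 = -s7 and s5 = c7), and the product t1·t2·t4·t5·t6·t7·t8 = 0, where t1 = a4-a5-a6-a7, t2 = a4-a5+a6+a7, t4 = a4+a5-a6-a7, t5 = a4-a5+a6-a7, t6 = a4-a5-a6+a7, t7 = a4+a5-a6+a7, t8 = a4+a5+a6-a7. -/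
open Matrix

noncomputable def pr (i : Fin 8) : (Fin 8 → ℝ) →L[ℝ] ℝ := ContinuousLinearMap.proj i

lemma hasF (i : Fin 8) (x : Fin 8 → ℝ) : HasFDerivAt (fun y : Fin 8 → ℝ => y i) (pr i) x :=
  hasFDerivAt_apply i x

lemma exists_left_nullvec {m n : ℕ} (A : Matrix (Fin m) (Fin n) ℝ) (h : A.rank < m) :
    ∃ v : Fin m → ℝ, v ≠ 0 ∧ Aᵀ.mulVec v = 0 := by
  by_contra hc
  push_neg at hc
  have hinj : Function.Injective Aᵀ.mulVecLin := by
    rw [← LinearMap.ker_eq_bot, Submodule.eq_bot_iff]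
    intro v hv
    by_contra hv0
    have h0 : Aᵀ.mulVecLin v = 0 := hv
    rw [Matrix.mulVecLin_apply] at h0
    exact hc v hv0 h0
  have hr : Aᵀ.rank = m := by
    rw [Matrix.rank, LinearMap.finrank_range_of_inj hinj, Module.finrank_fin_fun]
  rw [Matrix.rank_transpose] at hr
  omega

set_option maxHeartbeats 4000000 in
/-- For positive rod lengths, every singular configuration of the subsystem 4567
satisfies `c4 = 0`, `c6 = 0`, `s4^2 = 1`, `s6^2 = 1`, one of the two sign relations
between angles 5 and 7, and the vanishing of the product `t1*t2*t4*t5*t6*t7*t8`. -/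
theorem singular4567_structure (a4 a5 a6 a7 : ℝ)
    (h4 : a4 > 0) (h5 : a5 > 0) (h6 : a6 > 0) (h7 : a7 > 0)
    (c4 s4 c5 s5 c6 s6 c7 s7 : ℝ)
    (hQ : Q4567 a4 a5 a6 a7 ![c4, s4, c5, s5, c6, s6, c7, s7] = 0)
    (hrank : (jacobian (Q4567 a4 a5 a6 a7) ![c4, s4, c5, s5, c6, s6, c7, s7]).rank < 6) :
    c4 = 0 ∧ c6 = 0 ∧ s4 ^ 2 = 1 ∧ s6 ^ 2 = 1 ∧
      ((c5 = s7 ∧ s5 = -c7) ∨ (c5 = -s7 ∧ s5 = c7)) ∧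
      (a4 - a5 - a6 - a7) * (a4 - a5 + a6 + a7) * (a4 + a5 - a6 - a7) *
        (a4 - a5 + a6 - a7) * (a4 - a5 - a6 + a7) * (a4 + a5 - a6 + a7) *
        (a4 + a5 + a6 - a7) = 0 := by
  set x : Fin 8 → ℝ := ![c4, s4, c5, s5, c6, s6, c7, s7] with hx
  have x0 : x 0 = c4 := rfl
  have x1 : x 1 = s4 := rfl
  have x2 : x 2 = c5 := rfl
  have x3 : x 3 = s5 := rfl
  have x4 : x 4 = c6 := rfl
  have x5 : x 5 = s6 := rfl
  have x6 : x 6 = c7 := rfl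
  have x7 : x 7 = s7 := rfl
  -- the six scalar equations from Q = 0
  have eq1 : a4 * (s4 * c5 + c4 * s5) + a5 * c5 - a6 * (c6 * c7 - s6 * s7) - a7 * s7 = 0 :=
    congrFun hQ 0
  have eq2 : a4 * (c4 * c5 - s4 * s5) - a5 * s5 + a6 * (s6 * c7 + c6 * s7) - a7 * c7 = 0 :=
    congrFun hQ 1
  have e3 : c4 ^ 2 + s4 ^ 2 - 1 = 0 := congrFun hQ 2
  have e4 : c5 ^ 2 + s5 ^ 2 - 1 = 0 := congrFun hQ 3
  have e5 : c6 ^ 2 + s6 ^ 2 - 1 = 0 := congrFun hQ 4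
  have e6 : c7 ^ 2 + s7 ^ 2 - 1 = 0 := congrFun hQ 5
  -- rewriting the six components of Q
  have hq0 : (fun y : Fin 8 → ℝ => Q4567 a4 a5 a6 a7 y 0)
      = fun y => a4 * (y 1 * y 2 + y 0 * y 3) + a5 * y 2
        - a6 * (y 4 * y 6 - y 5 * y 7) - a7 * y 7 := by
    funext y; rfl
  have hq1 : (fun y : Fin 8 → ℝ => Q4567 a4 a5 a6 a7 y 1)
      = fun y => a4 * (y 0 * y 2 - y 1 * y 3) - a5 * y 3
        + a6 * (y 5 * y 6 + y 4 * y 7) - a7 * y 6 := by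
    funext y; rfl
  have hq2 : (fun y : Fin 8 → ℝ => Q4567 a4 a5 a6 a7 y 2)
      = fun y => y 0 * y 0 + y 1 * y 1 - 1 := by
    funext y; show y 0 ^ 2 + y 1 ^ 2 - 1 = _; ring
  have hq3 : (fun y : Fin 8 → ℝ => Q4567 a4 a5 a6 a7 y 3)
      = fun y => y 2 * y 2 + y 3 * y 3 - 1 := by
    funext y; show y 2 ^ 2 + y 3 ^ 2 - 1 = _; ring
  have hq4 : (fun y : Fin 8 → ℝ => Q4567 a4 a5 a6 a7 y 4)
      = fun y => y 4 * y 4 + y 5 * y 5 - 1 := by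
    funext y; show y 4 ^ 2 + y 5 ^ 2 - 1 = _; ring
  have hq5 : (fun y : Fin 8 → ℝ => Q4567 a4 a5 a6 a7 y 5)
      = fun y => y 6 * y 6 + y 7 * y 7 - 1 := by
    funext y; show y 6 ^ 2 + y 7 ^ 2 - 1 = _; ring
  -- derivatives of the six components
  have hH0 : HasFDerivAt (fun y : Fin 8 → ℝ =>
        a4 * (y 1 * y 2 + y 0 * y 3) + a5 * y 2 - a6 * (y 4 * y 6 - y 5 * y 7) - a7 * y 7)
      (a4 • (x 1 • pr 2 + x 2 • pr 1 + (x 0 • pr 3 + x 3 • pr 0)) + a5 • pr 2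
        - a6 • (x 4 • pr 6 + x 6 • pr 4 - (x 5 • pr 7 + x 7 • pr 5)) - a7 • pr 7) x := by
    exact ((((((hasF 1 x).mul (hasF 2 x)).add
      ((hasF 0 x).mul (hasF 3 x))).const_mul a4).add ((hasF 2 x).const_mul a5)).sub
      ((((hasF 4 x).mul (hasF 6 x)).sub ((hasF 5 x).mul (hasF 7 x))).const_mul a6)).sub
      ((hasF 7 x).const_mul a7)
  have hH1 : HasFDerivAt (fun y : Fin 8 → ℝ =>
        a4 * (y 0 * y 2 - y 1 * y 3) - a5 * y 3 + a6 * (y 5 * y 6 + y 4 * y 7) - a7 * y 6)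
      (a4 • (x 0 • pr 2 + x 2 • pr 0 - (x 1 • pr 3 + x 3 • pr 1)) - a5 • pr 3
        + a6 • (x 5 • pr 6 + x 6 • pr 5 + (x 4 • pr 7 + x 7 • pr 4)) - a7 • pr 6) x := by
    exact ((((((hasF 0 x).mul (hasF 2 x)).sub
      ((hasF 1 x).mul (hasF 3 x))).const_mul a4).sub ((hasF 3 x).const_mul a5)).add
      ((((hasF 5 x).mul (hasF 6 x)).add ((hasF 4 x).mul (hasF 7 x))).const_mul a6)).sub
      ((hasF 6 x).const_mul a7)
  have hH2 : HasFDerivAt (fun y : Fin 8 → ℝ => y 0 * y 0 + y 1 * y 1 - 1)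
      ((x 0 • pr 0 + x 0 • pr 0) + (x 1 • pr 1 + x 1 • pr 1)) x := by
    exact (((hasF 0 x).mul (hasF 0 x)).add ((hasF 1 x).mul (hasF 1 x))).sub_const 1
  have hH3 : HasFDerivAt (fun y : Fin 8 → ℝ => y 2 * y 2 + y 3 * y 3 - 1)
      ((x 2 • pr 2 + x 2 • pr 2) + (x 3 • pr 3 + x 3 • pr 3)) x := by
    exact (((hasF 2 x).mul (hasF 2 x)).add ((hasF 3 x).mul (hasF 3 x))).sub_const 1
  have hH4 : HasFDerivAt (fun y : Fin 8 → ℝ => y 4 * y 4 + y 5 * y 5 - 1)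
      ((x 4 • pr 4 + x 4 • pr 4) + (x 5 • pr 5 + x 5 • pr 5)) x := by
    exact (((hasF 4 x).mul (hasF 4 x)).add ((hasF 5 x).mul (hasF 5 x))).sub_const 1
  have hH5 : HasFDerivAt (fun y : Fin 8 → ℝ => y 6 * y 6 + y 7 * y 7 - 1)
      ((x 6 • pr 6 + x 6 • pr 6) + (x 7 • pr 7 + x 7 • pr 7)) x := by
    exact (((hasF 6 x).mul (hasF 6 x)).add ((hasF 7 x).mul (hasF 7 x))).sub_const 1
  have hF0 := hH0.fderiv
  have hF1 := hH1.fderiv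
  have hF2 := hH2.fderiv
  have hF3 := hH3.fderiv
  have hF4 := hH4.fderiv
  have hF5 := hH5.fderiv
  -- the left null vector
  obtain ⟨v, hvne, hv⟩ := exists_left_nullvec _ hrank
  -- the eight column equations
  have E0 : v 0 * (a4 * s5) + v 1 * (a4 * c5) + v 2 * (2 * c4) = 0 := by
    have h := congrFun hv 0
    simp only [Matrix.mulVec, dotProduct, Matrix.transpose_apply,
      Fin.sum_univ_six, Pi.zero_apply, jacobian, Matrix.of_apply,
      hq0, hq1, hq2, hq3, hq4, hq5, hF0, hF1, hF2, hF3, hF4, hF5] at h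
    simp (config := { decide := true }) [pr, Pi.single_apply, x0, x1, x2, x3, x4, x5, x6, x7] at h
    linear_combination h
  have E1 : v 0 * (a4 * c5) + v 1 * (-(a4 * s5)) + v 2 * (2 * s4) = 0 := by
    have h := congrFun hv 1
    simp only [Matrix.mulVec, dotProduct, Matrix.transpose_apply,
      Fin.sum_univ_six, Pi.zero_apply, jacobian, Matrix.of_apply,
      hq0, hq1, hq2, hq3, hq4, hq5, hF0, hF1, hF2, hF3, hF4, hF5] at h
    simp (config := { decide := true }) [pr, Pi.single_apply, x0, x1, x2, x3, x4, x5, x6, x7] at h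
    linear_combination h
  have E2 : v 0 * (a4 * s4 + a5) + v 1 * (a4 * c4) + v 3 * (2 * c5) = 0 := by
    have h := congrFun hv 2
    simp only [Matrix.mulVec, dotProduct, Matrix.transpose_apply,
      Fin.sum_univ_six, Pi.zero_apply, jacobian, Matrix.of_apply,
      hq0, hq1, hq2, hq3, hq4, hq5, hF0, hF1, hF2, hF3, hF4, hF5] at h
    simp (config := { decide := true }) [pr, Pi.single_apply, x0, x1, x2, x3, x4, x5, x6, x7] at h
    linear_combination h
  have E3 : v 0 * (a4 * c4) - v 1 * (a4 * s4 + a5) + v 3 * (2 * s5) = 0 := by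
    have h := congrFun hv 3
    simp only [Matrix.mulVec, dotProduct, Matrix.transpose_apply,
      Fin.sum_univ_six, Pi.zero_apply, jacobian, Matrix.of_apply,
      hq0, hq1, hq2, hq3, hq4, hq5, hF0, hF1, hF2, hF3, hF4, hF5] at h
    simp (config := { decide := true }) [pr, Pi.single_apply, x0, x1, x2, x3, x4, x5, x6, x7] at h
    linear_combination h
  have E4 : -(v 0) * (a6 * c7) + v 1 * (a6 * s7) + v 4 * (2 * c6) = 0 := by
    have h := congrFun hv 4
    simp only [Matrix.mulVec, dotProduct, Matrix.transpose_apply,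
      Fin.sum_univ_six, Pi.zero_apply, jacobian, Matrix.of_apply,
      hq0, hq1, hq2, hq3, hq4, hq5, hF0, hF1, hF2, hF3, hF4, hF5] at h
    simp (config := { decide := true }) [pr, Pi.single_apply, x0, x1, x2, x3, x4, x5, x6, x7] at h
    linear_combination h
  have E5 : v 0 * (a6 * s7) + v 1 * (a6 * c7) + v 4 * (2 * s6) = 0 := by
    have h := congrFun hv 5
    simp only [Matrix.mulVec, dotProduct, Matrix.transpose_apply,
      Fin.sum_univ_six, Pi.zero_apply, jacobian, Matrix.of_apply,
      hq0, hq1, hq2, hq3, hq4, hq5, hF0, hF1, hF2, hF3, hF4, hF5] at h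
    simp (config := { decide := true }) [pr, Pi.single_apply, x0, x1, x2, x3, x4, x5, x6, x7] at h
    linear_combination h
  have E6 : -(v 0) * (a6 * c6) + v 1 * (a6 * s6 - a7) + v 5 * (2 * c7) = 0 := by
    have h := congrFun hv 6
    simp only [Matrix.mulVec, dotProduct, Matrix.transpose_apply,
      Fin.sum_univ_six, Pi.zero_apply, jacobian, Matrix.of_apply,
      hq0, hq1, hq2, hq3, hq4, hq5, hF0, hF1, hF2, hF3, hF4, hF5] at h
    simp (config := { decide := true }) [pr, Pi.single_apply, x0, x1, x2, x3, x4, x5, x6, x7] at h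
    linear_combination h
  have E7 : v 0 * (a6 * s6 - a7) + v 1 * (a6 * c6) + v 5 * (2 * s7) = 0 := by
    have h := congrFun hv 7
    simp only [Matrix.mulVec, dotProduct, Matrix.transpose_apply,
      Fin.sum_univ_six, Pi.zero_apply, jacobian, Matrix.of_apply,
      hq0, hq1, hq2, hq3, hq4, hq5, hF0, hF1, hF2, hF3, hF4, hF5] at h
    simp (config := { decide := true }) [pr, Pi.single_apply, x0, x1, x2, x3, x4, x5, x6, x7] at h
    linear_combination h
  -- tangent combinations
  have hu1 : v 0 * (a4 * (c4 * c5 - s4 * s5)) + v 1 * (-(a4 * (s4 * c5 + c4 * s5))) = 0 := by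
    linear_combination (-s4) * E0 + c4 * E1
  have hu2 : v 0 * (a4 * c4 * c5 - (a4 * s4 + a5) * s5)
      + v 1 * (-(a4 * c4 * s5 + (a4 * s4 + a5) * c5)) = 0 := by
    linear_combination (-s5) * E2 + c5 * E3
  have hu3 : v 0 * (a6 * (s6 * c7 + c6 * s7)) + v 1 * (a6 * (c6 * c7 - s6 * s7)) = 0 := by
    linear_combination (-s6) * E4 + c6 * E5
  have hu4 : v 0 * (a6 * (c6 * s7 + s6 * c7) - a7 * c7)
      + v 1 * (a6 * (c6 * c7 - s6 * s7) + a7 * s7) = 0 := by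
    linear_combination (-s7) * E6 + c7 * E7
  -- (v 0, v 1) ≠ 0
  have hne : v 0 ≠ 0 ∨ v 1 ≠ 0 := by
    by_contra hcon
    push_neg at hcon
    obtain ⟨hv0, hv1⟩ := hcon
    have hv2 : v 2 = 0 := by
      linear_combination (c4 / 2) * E0 + (s4 / 2) * E1 - v 2 * e3
        - (c4 / 2 * (a4 * s5) + s4 / 2 * (a4 * c5)) * hv0
        - (c4 / 2 * (a4 * c5) + s4 / 2 * (-(a4 * s5))) * hv1
    have hv3 : v 3 = 0 := by
      linear_combination (c5 / 2) * E2 + (s5 / 2) * E3 - v 3 * e4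
        - (c5 / 2 * (a4 * s4 + a5) + s5 / 2 * (a4 * c4)) * hv0
        - (c5 / 2 * (a4 * c4) - s5 / 2 * (a4 * s4 + a5)) * hv1
    have hv4 : v 4 = 0 := by
      linear_combination (c6 / 2) * E4 + (s6 / 2) * E5 - v 4 * e5
        - (-(c6 / 2) * (a6 * c7) + s6 / 2 * (a6 * s7)) * hv0
        - (c6 / 2 * (a6 * s7) + s6 / 2 * (a6 * c7)) * hv1
    have hv5 : v 5 = 0 := by
      linear_combination (c7 / 2) * E6 + (s7 / 2) * E7 - v 5 * e6
        - (-(c7 / 2) * (a6 * c6) + s7 / 2 * (a6 * s6 - a7)) * hv0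
        - (c7 / 2 * (a6 * s6 - a7) + s7 / 2 * (a6 * c6)) * hv1
    apply hvne
    funext i
    fin_cases i <;> assumption
  -- 2x2 minors of the tangent matrix vanish
  have key : ∀ U V U' V' : ℝ, v 0 * U + v 1 * V = 0 → v 0 * U' + v 1 * V' = 0 →
      U * V' - U' * V = 0 := by
    intro U V U' V' h1 h2
    rcases hne with h | h
    · have h0 : v 0 * (U * V' - U' * V) = 0 := by linear_combination V' * h1 - V * h2
      rcases mul_eq_zero.mp h0 with h' | h'
      · exact absurd h' h
      · exact h'
    · have h0 : v 1 * (U * V' - U' * V) = 0 := by linear_combination U * h2 - U' * h1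
      rcases mul_eq_zero.mp h0 with h' | h'
      · exact absurd h' h
      · exact h'
  have m12 := key _ _ _ _ hu1 hu2
  have m13 := key _ _ _ _ hu1 hu3
  have m23 := key _ _ _ _ hu2 hu3
  have m34 := key _ _ _ _ hu3 hu4
  -- c4 = 0
  have hc4 : c4 = 0 := by
    have h : a4 * a5 * c4 = 0 := by
      linear_combination (-1) * m12 - (a4 * a5 * c4) * e4
    simpa [mul_eq_zero, h4.ne', h5.ne'] using h
  -- c6 = 0
  have hc6 : c6 = 0 := by
    have h : a6 * a7 * c6 = 0 := by
      linear_combination m34 - (a6 * a7 * c6) * e6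
    simpa [mul_eq_zero, h6.ne', h7.ne'] using h
  have hs4 : s4 ^ 2 = 1 := by linear_combination e3 - c4 * hc4
  have hs6 : s6 ^ 2 = 1 := by linear_combination e5 - c6 * hc6
  -- orthogonality of (c5,s5) and (c7,s7)
  have h0 : a5 * a6 * (s6 * (c5 * c7 + s5 * s7)) = 0 := by
    linear_combination m23 - m13 - a5 * a6 * (s7 * c5 - c7 * s5) * hc6
  have h0' : s6 * (c5 * c7 + s5 * s7) = 0 := by
    simpa [mul_eq_zero, h5.ne', h6.ne'] using h0
  have horth : c5 * c7 + s5 * s7 = 0 := by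
    linear_combination s6 * h0' - (c5 * c7 + s5 * s7) * hs6
  -- the reduced equations
  have hk1 : (a4 * s4 + a5) * c5 = (a7 - a6 * s6) * s7 := by
    linear_combination eq1 - a4 * s5 * hc4 + a6 * c7 * hc6
  have hk2 : (a4 * s4 + a5) * s5 = -((a7 - a6 * s6) * c7) := by
    linear_combination (-1) * eq2 + a4 * c5 * hc4 + a6 * s7 * hc6
  have hkm : (a4 * s4 + a5) ^ 2 = (a7 - a6 * s6) ^ 2 := by
    linear_combination ((a4 * s4 + a5) * c5 + (a7 - a6 * s6) * s7) * hk1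
      + ((a4 * s4 + a5) * s5 - (a7 - a6 * s6) * c7) * hk2
      - (a4 * s4 + a5) ^ 2 * e4 + (a7 - a6 * s6) ^ 2 * e6
  -- the sign relation
  have hd2 : (c5 * s7 - s5 * c7) ^ 2 = 1 := by
    linear_combination (-(c5 * c7 + s5 * s7)) * horth + (c7 ^ 2 + s7 ^ 2) * e4 + e6
  have hc5d : c5 = (c5 * s7 - s5 * c7) * s7 := by
    linear_combination c7 * horth - c5 * e6
  have hs5d : s5 = -((c5 * s7 - s5 * c7) * c7) := by
    linear_combination s7 * horth - s5 * e6
  have hsign : (c5 = s7 ∧ s5 = -c7) ∨ (c5 = -s7 ∧ s5 = c7) := by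
    have hd : (c5 * s7 - s5 * c7 - 1) * (c5 * s7 - s5 * c7 + 1) = 0 := by
      linear_combination hd2
    rcases mul_eq_zero.mp hd with h | h
    · left
      constructor
      · linear_combination hc5d + s7 * h
      · linear_combination hs5d - c7 * h
    · right
      constructor
      · linear_combination hc5d + s7 * h
      · linear_combination hs5d - c7 * h
  refine ⟨hc4, hc6, hs4, hs6, hsign, ?_⟩
  -- the product condition
  have hs4' : s4 = 1 ∨ s4 = -1 := by
    have h : (s4 - 1) * (s4 + 1) = 0 := by linear_combination hs4
    rcases mul_eq_zero.mp h with h | h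
    · left; linarith
    · right; linarith
  have hs6' : s6 = 1 ∨ s6 = -1 := by
    have h : (s6 - 1) * (s6 + 1) = 0 := by linear_combination hs6
    rcases mul_eq_zero.mp h with h | h
    · left; linarith
    · right; linarith
  rcases hs4' with h4' | h4' <;> rcases hs6' with h6' | h6' <;> rw [h4', h6'] at hkm
  · -- s4 = 1, s6 = 1 : k = a4+a5, m = a7-a6
    have hf : (a4 + a5 + a6 - a7) * (a4 + a5 - a6 + a7) = 0 := by linear_combination hkm
    rcases mul_eq_zero.mp hf with h | h
    · linear_combination ((a4 - a5 - a6 - a7) * (a4 - a5 + a6 + a7) * (a4 + a5 - a6 - a7) *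
        (a4 - a5 + a6 - a7) * (a4 - a5 - a6 + a7) * (a4 + a5 - a6 + a7)) * h
    · linear_combination ((a4 - a5 - a6 - a7) * (a4 - a5 + a6 + a7) * (a4 + a5 - a6 - a7) *
        (a4 - a5 + a6 - a7) * (a4 - a5 - a6 + a7) * (a4 + a5 + a6 - a7)) * h
  · -- s4 = 1, s6 = -1 : k = a4+a5, m = a7+a6
    have hf : (a4 + a5 - a6 - a7) * (a4 + a5 + a6 + a7) = 0 := by linear_combination hkm
    rcases mul_eq_zero.mp hf with h | h
    · linear_combination ((a4 - a5 - a6 - a7) * (a4 - a5 + a6 + a7) *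
        (a4 - a5 + a6 - a7) * (a4 - a5 - a6 + a7) * (a4 + a5 - a6 + a7) *
        (a4 + a5 + a6 - a7)) * h
    · exfalso; linarith
  · -- s4 = -1, s6 = 1 : k = a5-a4, m = a7-a6
    have hf : (a4 - a5 + a6 - a7) * (a4 - a5 - a6 + a7) = 0 := by linear_combination hkm
    rcases mul_eq_zero.mp hf with h | h
    · linear_combination ((a4 - a5 - a6 - a7) * (a4 - a5 + a6 + a7) * (a4 + a5 - a6 - a7) *
        (a4 - a5 - a6 + a7) * (a4 + a5 - a6 + a7) * (a4 + a5 + a6 - a7)) * h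
    · linear_combination ((a4 - a5 - a6 - a7) * (a4 - a5 + a6 + a7) * (a4 + a5 - a6 - a7) *
        (a4 - a5 + a6 - a7) * (a4 + a5 - a6 + a7) * (a4 + a5 + a6 - a7)) * h
  · -- s4 = -1, s6 = -1 : k = a5-a4, m = a7+a6
    have hf : (a4 - a5 + a6 + a7) * (a4 - a5 - a6 - a7) = 0 := by linear_combination hkm
    rcases mul_eq_zero.mp hf with h | h
    · linear_combination ((a4 - a5 - a6 - a7) * (a4 + a5 - a6 - a7) *
        (a4 - a5 + a6 - a7) * (a4 - a5 - a6 + a7) * (a4 + a5 - a6 + a7) *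
        (a4 + a5 + a6 - a7)) * h
    · linear_combination ((a4 - a5 + a6 + a7) * (a4 + a5 - a6 - a7) *
        (a4 - a5 + a6 - a7) * (a4 - a5 - a6 + a7) * (a4 + a5 - a6 + a7) *
        (a4 + a5 + a6 - a7)) * h
end

section
/- Fix real parameters a1, a2, a3, b1, b2 and reals c3, s3 with c3^2 + s3^2 = 1. Every real solution (c1, s1, c2, s2) of the system K1 satisfies 2*a1*a2*c2 = a1^2 + a2^2 - d0 and 4*a1^2*a2^2*s2^2 = -n1*n2, where d0 = a3^2 + 2*a3*b1*s3 - 2*a3*b2*c3 + b1^2 + b2^2, n1 = (a1+a2)^2 - d0, and n2 = (a1-a2)^2 - d0. In particular, if K1 has a real solution then n1*n2 ≤ 0. -/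
/-- The quantity `d0 = a3^2 + 2*a3*b1*s3 - 2*a3*b2*c3 + b1^2 + b2^2`. -/
noncomputable def d0 (a3 b1 b2 c3 s3 : ℝ) : ℝ :=
  a3 ^ 2 + 2 * a3 * b1 * s3 - 2 * a3 * b2 * c3 + b1 ^ 2 + b2 ^ 2

/-- The quantity `n1 = (a1+a2)^2 - d0`. -/
noncomputable def n1 (a1 a2 a3 b1 b2 c3 s3 : ℝ) : ℝ :=
  (a1 + a2) ^ 2 - d0 a3 b1 b2 c3 s3

/-- The quantity `n2 = (a1-a2)^2 - d0`. -/
noncomputable def n2 (a1 a2 a3 b1 b2 c3 s3 : ℝ) : ℝ :=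
  (a1 - a2) ^ 2 - d0 a3 b1 b2 c3 s3

/-- The system `K1` in the variables `(c1, s1, c2, s2)`. -/
def K1 (a1 a2 a3 b1 b2 c3 s3 c1 s1 c2 s2 : ℝ) : Prop :=
  a2 * (-(c1 * c2) + s1 * s2) + a1 * c1 - a3 * s3 - b1 = 0 ∧
  a2 * (-(s1 * c2) - c1 * s2) + a1 * s1 + a3 * c3 - b2 = 0 ∧
  c1 ^ 2 + s1 ^ 2 = 1 ∧ c2 ^ 2 + s2 ^ 2 = 1

/-- Every real solution of `K1` satisfies `2*a1*a2*c2 = a1^2 + a2^2 - d0` and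
`4*a1^2*a2^2*s2^2 = -n1*n2`; in particular, if `K1` has a real solution then
`n1*n2 ≤ 0`. -/
theorem K1_solution_relations (a1 a2 a3 b1 b2 c3 s3 : ℝ)
    (h3 : c3 ^ 2 + s3 ^ 2 = 1) :
    (∀ c1 s1 c2 s2 : ℝ, K1 a1 a2 a3 b1 b2 c3 s3 c1 s1 c2 s2 →
      2 * a1 * a2 * c2 = a1 ^ 2 + a2 ^ 2 - d0 a3 b1 b2 c3 s3 ∧
      4 * a1 ^ 2 * a2 ^ 2 * s2 ^ 2 =
        -(n1 a1 a2 a3 b1 b2 c3 s3 * n2 a1 a2 a3 b1 b2 c3 s3)) ∧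
    ((∃ c1 s1 c2 s2 : ℝ, K1 a1 a2 a3 b1 b2 c3 s3 c1 s1 c2 s2) →
      n1 a1 a2 a3 b1 b2 c3 s3 * n2 a1 a2 a3 b1 b2 c3 s3 ≤ 0) := by
  have main : ∀ c1 s1 c2 s2 : ℝ, K1 a1 a2 a3 b1 b2 c3 s3 c1 s1 c2 s2 →
      2 * a1 * a2 * c2 = a1 ^ 2 + a2 ^ 2 - d0 a3 b1 b2 c3 s3 ∧
      4 * a1 ^ 2 * a2 ^ 2 * s2 ^ 2 =
        -(n1 a1 a2 a3 b1 b2 c3 s3 * n2 a1 a2 a3 b1 b2 c3 s3) := by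
    rintro c1 s1 c2 s2 ⟨h1, h2, hc, hd⟩
    have key : 2 * a1 * a2 * c2 = a1 ^ 2 + a2 ^ 2 - d0 a3 b1 b2 c3 s3 := by
      simp only [d0]
      linear_combination (-(a2 * (-(c1 * c2) + s1 * s2) + a1 * c1 + a3 * s3 + b1)) * h1 +
        (-(a2 * (-(s1 * c2) - c1 * s2) + a1 * s1 - a3 * c3 + b2)) * h2 +
        (a2 ^ 2 * (c2 ^ 2 + s2 ^ 2) + a1 ^ 2 - 2 * a1 * a2 * c2) * hc +
        a2 ^ 2 * hd + (- a3 ^ 2) * h3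
    refine ⟨key, ?_⟩
    simp only [n1, n2] at *
    linear_combination (-(2 * a1 * a2 * c2 + a1 ^ 2 + a2 ^ 2 - d0 a3 b1 b2 c3 s3)) * key +
      4 * a1 ^ 2 * a2 ^ 2 * hd
  refine ⟨main, ?_⟩
  rintro ⟨c1, s1, c2, s2, hk⟩
  have := (main c1 s1 c2 s2 hk).2
  nlinarith [sq_nonneg (a1 * a2 * s2)]
end

section
/- Fix a real number a > 0 and set a4 = a5 = a6 = a7 = a. Every point x = (c4, s4, c5, s5, c6, s6, c7, s7) ∈ ℝ^8 with Q(x) = 0 and s6 = -s4 satisfies at least one of the following three sets of conditions: (i) c4 = c6, s5 = s7*c6 - c7*s4, and c5 = c7*c6 + s7*s4; (ii) c4 = 0, c6 = 0, and s4 = -1; (iii) c4 = -c6, s5 = -c7, and c5 = s7. -/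
theorem eq_of_reflection_system {K : Type*} [Field K] {α β u v u' v' : K}
    (hdet : α ^ 2 + β ^ 2 ≠ 0)
    (h₁ : α * u + β * v = α * u' + β * v') (h₂ : β * u - α * v = β * u' - α * v') :
    u = u' ∧ v = v' := by
  have hu : (α ^ 2 + β ^ 2) * (u - u') = 0 := by linear_combination α * h₁ + β * h₂
  have hv : (α ^ 2 + β ^ 2) * (v - v') = 0 := by linear_combination β * h₁ - α * h₂
  exact ⟨sub_eq_zero.mp ((mul_eq_zero.mp hu).resolve_left hdet),
    sub_eq_zero.mp ((mul_eq_zero.mp hv).resolve_left hdet)⟩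

theorem loop_equations_of_Q4567_eq_zero {a c4 s4 c5 s5 c6 s6 c7 s7 : ℝ} (ha : a ≠ 0)
    (hQ : Q4567 a a a a ![c4, s4, c5, s5, c6, s6, c7, s7] = 0) :
    (1 + s4) * c5 + c4 * s5 = c6 * c7 - s6 * s7 + s7 ∧
    c4 * c5 - (1 + s4) * s5 = c7 - s6 * c7 - c6 * s7 ∧
    c4 ^ 2 + s4 ^ 2 = 1 ∧ c6 ^ 2 + s6 ^ 2 = 1 := by
  have h₁ := congrFun hQ 0
  have h₂ := congrFun hQ 1
  have h₃ := congrFun hQ 2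
  have h₅ := congrFun hQ 4
  simp only [Q4567, Fin.isValue, Matrix.cons_val_one, Matrix.cons_val_zero, Matrix.cons_val,
    Pi.zero_apply] at h₁ h₂ h₃ h₅
  refine ⟨mul_left_cancel₀ ha ?_, mul_left_cancel₀ ha ?_, by linarith, by linarith⟩
  · linear_combination h₁
  · linear_combination h₂

/-- When `a4 = a5 = a6 = a7 = a > 0`, every configuration of the subsystem 4567
with `s6 = -s4` lies in one of the three components `I1`, `I2`, `I3`. -/
theorem equalLengths_three_components (a : ℝ) (ha : a > 0)
    (c4 s4 c5 s5 c6 s6 c7 s7 : ℝ)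
    (hQ : Q4567 a a a a ![c4, s4, c5, s5, c6, s6, c7, s7] = 0)
    (hs6 : s6 = -s4) :
    (c4 = c6 ∧ s5 = s7 * c6 - c7 * s4 ∧ c5 = c7 * c6 + s7 * s4) ∨
    (c4 = 0 ∧ c6 = 0 ∧ s4 = -1) ∨
    (c4 = -c6 ∧ s5 = -c7 ∧ c5 = s7) := by
  subst hs6
  obtain ⟨e₁, e₂, hcirc₄, hcirc₆⟩ := loop_equations_of_Q4567_eq_zero ha.ne' hQ
  have hc6 : c6 = c4 ∨ c6 = -c4 := sq_eq_sq_iff_eq_or_eq_neg.mp (by linarith)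
  by_cases hs4 : s4 = -1
  · have hc4 : c4 = 0 := sq_eq_zero_iff.mp (by subst hs4; linarith)
    exact Or.inr (Or.inl ⟨hc4, by rcases hc6 with h | h <;> simp [h, hc4], hs4⟩)
  have hdet : (1 + s4) ^ 2 + c4 ^ 2 ≠ 0 :=
    (add_pos_of_pos_of_nonneg (sq_pos_of_ne_zero fun h ↦ hs4 (by linarith))
      (sq_nonneg c4)).ne'
  rcases hc6 with hc6 | hc6 <;> subst c6
  · obtain ⟨hc5, hs5⟩ := eq_of_reflection_system (α := 1 + s4) (β := c4) (u := c5) (v := s5)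
      (u' := c7 * c4 + s7 * s4) (v' := s7 * c4 - c7 * s4) hdet
      (by linear_combination e₁ - s7 * hcirc₄) (by linear_combination e₂ - c7 * hcirc₄)
    exact Or.inl ⟨rfl, hs5, hc5⟩
  · obtain ⟨hc5, hs5⟩ := eq_of_reflection_system (α := 1 + s4) (β := c4) (u := c5) (v := s5)
      (u' := s7) (v' := -c7) hdet (by linear_combination e₁) (by linear_combination e₂)
    exact Or.inr (Or.inr ⟨by ring, hs5, hc5⟩)
end

section
/- Fix real parameters a1, ..., a7, b1, b2, w1, w2 with a_i > 0 for all i, a7 = a5 + a6 - a4, a4 ≠ a5, a1 ≠ a2, and b2 ≠ w2. Suppose there exists (c3, s3, c7, s7) ∈ ℝ^4 with c3^2 + s3^2 = 1, c7^2 + s7^2 = 1, (a4-a5)*s7 + a3*s3 + b1 - w1 = 0, (a5-a4)*c7 - a3*c3 + b2 - w2 = 0, and n1*(4*a1*a2 - n1) > 0, where n1 = (a1+a2)^2 - d0 and d0 = a3^2 + 2*a3*b1*s3 - 2*a3*b2*c3 + b1^2 + b2^2. Then there exist at least 2 distinct points x ∈ ℝ^14 that are singular points of the full constraint system, i.e.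 p(x) = 0 and the 13×14 Jacobian matrix of p at x has rank strictly less than 13. -/
/-- The full constraint map `p : ℝ^14 → ℝ^13` of the Andrews squeezing mechanism,
in the variables `(c1, s1, c2, s2, c3, s3, c4, s4, c5, s5, c6, s6, c7, s7)`. -/
noncomputable def andrewsP (a1 a2 a3 a4 a5 a6 a7 b1 b2 w1 w2 : ℝ)
    (x : Fin 14 → ℝ) : Fin 13 → ℝ :=
  ![a1 * x 0 - a2 * (x 0 * x 2 - x 1 * x 3) - a3 * x 5 - b1,
    a1 * x 1 - a2 * (x 1 * x 2 + x 0 * x 3) + a3 * x 4 - b2,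
    a1 * x 0 - a2 * (x 0 * x 2 - x 1 * x 3) - a4 * (x 7 * x 8 + x 6 * x 9) - a5 * x 8 - w1,
    a1 * x 1 - a2 * (x 1 * x 2 + x 0 * x 3) + a4 * (x 6 * x 8 - x 7 * x 9) - a5 * x 9 - w2,
    a1 * x 0 - a2 * (x 0 * x 2 - x 1 * x 3) - a6 * (x 10 * x 12 - x 11 * x 13) - a7 * x 13 - w1,
    a1 * x 1 - a2 * (x 1 * x 2 + x 0 * x 3) - a6 * (x 11 * x 12 + x 10 * x 13) + a7 * x 12 - w2,
    x 0 ^ 2 + x 1 ^ 2 - 1,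
    x 2 ^ 2 + x 3 ^ 2 - 1,
    x 4 ^ 2 + x 5 ^ 2 - 1,
    x 6 ^ 2 + x 7 ^ 2 - 1,
    x 8 ^ 2 + x 9 ^ 2 - 1,
    x 10 ^ 2 + x 11 ^ 2 - 1,
    x 12 ^ 2 + x 13 ^ 2 - 1]

/-- A point `x ∈ ℝ^14` is a singular point of the Andrews constraint system if
`p(x) = 0` and the `13 × 14` Jacobian matrix of `p` at `x` has rank `< 13`. -/
def IsSingularAndrews (a1 a2 a3 a4 a5 a6 a7 b1 b2 w1 w2 : ℝ) (x : Fin 14 → ℝ) : Prop :=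
  andrewsP a1 a2 a3 a4 a5 a6 a7 b1 b2 w1 w2 x = 0 ∧
  (jacobian (andrewsP a1 a2 a3 a4 a5 a6 a7 b1 b2 w1 w2) x).rank < 13

/-!
Put the four links of the loop 4–7 on one line, every link vector of that loop being a multiple
of `(s7, -c7)` (`alignedConfig`); the loop then closes exactly when `a7 = a5 + a6 - a4`. At such
a configuration the function `s7 (p3 - p5) - c7 (p4 - p6)` plus suitable multiples of the circle
constraints `p10, …, p13` has a critical point, so its coefficient vector (`alignedNullVector`)
is a left null vector of the Jacobian.

What is left is the dyad of links 1–2, which has to reach the point `(b1 + a3 s3, b2 - a3 c3)`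
at squared distance `d0` from its base. By the law of cosines its elbow cosine `c2` satisfies
`2 a1 a2 c2 = a1² + a2² - d0`, and then `n1 (4 a1 a2 - n1) = (2 a1 a2)² (1 - c2²)`: the
hypothesis says that the elbow is neither stretched nor folded, so the two assembly modes
`s2 = ±√(1 - c2²)` give two distinct singular points.
-/

open Matrix

theorem Matrix.rank_lt_card_of_vecMul_eq_zero {m n R : Type*} [Field R] [Fintype m] [Fintype n]
    (M : Matrix m n R) {v : m → R} (hv : v ≠ 0) (h : v ᵥ* M = 0) :
    M.rank < Fintype.card m := by
  refine M.rank_le_card_height.lt_of_ne fun hrank => hv ?_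
  have hli : LinearIndependent R M.row := by
    rw [linearIndependent_iff_card_eq_finrank_span, Set.finrank, ← M.rank_eq_finrank_span_row,
      hrank]
  exact funext (Fintype.linearIndependent_iff.1 hli v ((vecMul_eq_sum v M).symm.trans h))

theorem vecMul_jacobian {m n : ℕ} {f : (Fin n → ℝ) → Fin m → ℝ} {x : Fin n → ℝ}
    (hf : ∀ i, DifferentiableAt ℝ (fun y => f y i) x) (v : Fin m → ℝ) :
    v ᵥ* jacobian f x = fun j => fderiv ℝ (fun y => v ⬝ᵥ f y) x (Pi.single j 1) := by
  ext j
  simp (disch := fun_prop) only [dotProduct, fderiv_fun_sum, fderiv_const_mul]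
  simp [vecMul, dotProduct, jacobian]

theorem fderiv_apply_coord {n : ℕ} (x : Fin n → ℝ) (k : Fin n) :
    fderiv ℝ (fun y : Fin n → ℝ => y k) x = ContinuousLinearMap.proj k :=
  (hasFDerivAt_apply k x).fderiv

theorem exists_rotation_of_sq_add_sq_eq {A B u1 u2 : ℝ} (h : A ^ 2 + B ^ 2 = u1 ^ 2 + u2 ^ 2)
    (h0 : A ^ 2 + B ^ 2 ≠ 0) :
    ∃ c s : ℝ, c ^ 2 + s ^ 2 = 1 ∧ c * A - s * B = u1 ∧ s * A + c * B = u2 := by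
  refine ⟨(A * u1 + B * u2) / (A ^ 2 + B ^ 2), (A * u2 - B * u1) / (A ^ 2 + B ^ 2), ?_, ?_, ?_⟩
  · rw [div_pow, div_pow, ← add_div, div_eq_one_iff_eq (pow_ne_zero 2 h0)]
    linear_combination -(A ^ 2 + B ^ 2) * h
  · field_simp
    ring
  · field_simp
    ring

theorem exists_dyad_pose {a1 a2 c2 s2 u1 u2 : ℝ} (hs : a2 * s2 ≠ 0)
    (hlen : (a1 - a2 * c2) ^ 2 + (a2 * s2) ^ 2 = u1 ^ 2 + u2 ^ 2) :
    ∃ c1 s1 : ℝ, c1 ^ 2 + s1 ^ 2 = 1 ∧ a1 * c1 - a2 * (c1 * c2 - s1 * s2) = u1 ∧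
      a1 * s1 - a2 * (s1 * c2 + c1 * s2) = u2 := by
  have hw : (a1 - a2 * c2) ^ 2 + (-(a2 * s2)) ^ 2 = u1 ^ 2 + u2 ^ 2 := by rwa [neg_sq]
  have hw0 : (a1 - a2 * c2) ^ 2 + (-(a2 * s2)) ^ 2 ≠ 0 :=
    (add_pos_of_nonneg_of_pos (sq_nonneg _) (sq_pos_of_ne_zero (neg_ne_zero.2 hs))).ne'
  obtain ⟨c1, s1, hc1, hx, hy⟩ := exists_rotation_of_sq_add_sq_eq hw hw0
  exact ⟨c1, s1, hc1, by linear_combination hx, by linear_combination hy⟩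

theorem exists_elbow_of_mul_pos {a1 a2 D : ℝ}
    (h : 0 < ((a1 + a2) ^ 2 - D) * (4 * a1 * a2 - ((a1 + a2) ^ 2 - D))) :
    ∃ c s : ℝ, c ^ 2 + s ^ 2 = 1 ∧ a2 * s ≠ 0 ∧ (a1 - a2 * c) ^ 2 + (a2 * s) ^ 2 = D := by
  have ha : a1 * a2 ≠ 0 := by
    intro ha
    have : ((a1 + a2) ^ 2 - D) * (4 * a1 * a2 - ((a1 + a2) ^ 2 - D)) =
        -((a1 + a2) ^ 2 - D) ^ 2 := by
      linear_combination 4 * ((a1 + a2) ^ 2 - D) * ha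
    rw [this] at h
    linarith [sq_nonneg ((a1 + a2) ^ 2 - D)]
  obtain ⟨c, hcD⟩ : ∃ c, 2 * a1 * a2 * c = a1 ^ 2 + a2 ^ 2 - D :=
    ⟨_, mul_div_cancel₀ _ (by rw [mul_assoc]; exact mul_ne_zero two_ne_zero ha)⟩
  have hc : 0 < 1 - c ^ 2 := by
    have : ((a1 + a2) ^ 2 - D) * (4 * a1 * a2 - ((a1 + a2) ^ 2 - D)) =
        (2 * a1 * a2) ^ 2 * (1 - c ^ 2) := by
      linear_combination (2 * a1 * a2 * c + (a1 ^ 2 + a2 ^ 2 - D)) * hcD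
    rw [this] at h
    exact pos_of_mul_pos_right h (sq_nonneg _)
  refine ⟨c, √(1 - c ^ 2), ?_, ?_, ?_⟩
  · rw [Real.sq_sqrt hc.le]
    ring
  · exact mul_ne_zero (right_ne_zero_of_mul ha) (Real.sqrt_pos.2 hc).ne'
  · rw [mul_pow, Real.sq_sqrt hc.le]
    linear_combination -hcD

def alignedConfig (c1 s1 c2 s2 c3 s3 c7 s7 : ℝ) : Fin 14 → ℝ :=
  ![c1, s1, c2, s2, c3, s3, 0, -1, s7, -c7, 0, 1, c7, s7]

noncomputable def alignedNullVector (a4 a5 a6 c7 s7 : ℝ) : Fin 13 → ℝ :=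
  ![0, 0, s7, -c7, -s7, c7, 0, 0, 0, -(a4 / 2), -((a4 - a5) / 2), a6 / 2, (a4 - a5) / 2]

section Andrews

variable {a1 a2 a3 a4 a5 a6 a7 b1 b2 w1 w2 c1 s1 c2 s2 c3 s3 c7 s7 : ℝ}

theorem differentiable_andrewsP_apply (i : Fin 13) :
    Differentiable ℝ (fun y => andrewsP a1 a2 a3 a4 a5 a6 a7 b1 b2 w1 w2 y i) := by
  fin_cases i <;>
    simp only [andrewsP, Fin.isValue, Fin.zero_eta, Fin.mk_one, Fin.reduceFinMk, cons_val] <;>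
    fun_prop

theorem fderiv_dotProduct_andrewsP_alignedConfig (ha7 : a7 = a5 + a6 - a4)
    (hc7 : c7 ^ 2 + s7 ^ 2 = 1) (j : Fin 14) :
    fderiv ℝ (fun y =>
        alignedNullVector a4 a5 a6 c7 s7 ⬝ᵥ andrewsP a1 a2 a3 a4 a5 a6 a7 b1 b2 w1 w2 y)
      (alignedConfig c1 s1 c2 s2 c3 s3 c7 s7) (Pi.single j 1) = 0 := by
  have hG : (fun y =>
      alignedNullVector a4 a5 a6 c7 s7 ⬝ᵥ andrewsP a1 a2 a3 a4 a5 a6 a7 b1 b2 w1 w2 y) = fun y =>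
      s7 * (-a4 * (y 7 * y 8 + y 6 * y 9) - a5 * y 8 + a6 * (y 10 * y 12 - y 11 * y 13)
        + a7 * y 13)
      - c7 * (a4 * (y 6 * y 8 - y 7 * y 9) - a5 * y 9 + a6 * (y 11 * y 12 + y 10 * y 13)
        - a7 * y 12)
      - a4 / 2 * (y 6 ^ 2 + y 7 ^ 2 - 1) - (a4 - a5) / 2 * (y 8 ^ 2 + y 9 ^ 2 - 1)
      + a6 / 2 * (y 10 ^ 2 + y 11 ^ 2 - 1) + (a4 - a5) / 2 * (y 12 ^ 2 + y 13 ^ 2 - 1) := by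
    funext y
    simp only [dotProduct, alignedNullVector, andrewsP, Fin.sum_univ_succ, Fin.isValue,
      cons_val_zero, cons_val_succ, Finset.univ_unique, Fin.default_eq_zero, cons_val_fin_one,
      Finset.sum_const, Finset.card_singleton, one_smul]
    ring
  rw [hG]
  simp (disch := fun_prop) only [fderiv_fun_add, fderiv_fun_sub, fderiv_fun_mul,
    fderiv_fun_pow, fderiv_apply_coord, fderiv_fun_neg, fderiv_fun_const, Pi.zero_apply,
    _root_.zero_apply, _root_.add_apply, _root_.sub_apply, _root_.smul_apply, _root_.neg_apply,
    ContinuousLinearMap.proj_apply, smul_eq_mul, Pi.single_apply]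
  fin_cases j <;>
    simp only [alignedConfig, Fin.isValue, Fin.zero_eta, Fin.mk_one, Fin.reduceFinMk, cons_val,
      Fin.reduceEq, ↓reduceIte] <;>
    grind

theorem rank_jacobian_andrewsP_alignedConfig_lt (ha7 : a7 = a5 + a6 - a4)
    (hc7 : c7 ^ 2 + s7 ^ 2 = 1) :
    (jacobian (andrewsP a1 a2 a3 a4 a5 a6 a7 b1 b2 w1 w2)
      (alignedConfig c1 s1 c2 s2 c3 s3 c7 s7)).rank < 13 := by
  have hv : alignedNullVector a4 a5 a6 c7 s7 ≠ 0 := by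
    intro h
    have h2 : s7 = 0 := congrFun h 2
    have h3 : -c7 = 0 := congrFun h 3
    nlinarith
  simpa using Matrix.rank_lt_card_of_vecMul_eq_zero _ hv <| by
    rw [vecMul_jacobian fun i => (differentiable_andrewsP_apply i).differentiableAt]
    exact funext (fderiv_dotProduct_andrewsP_alignedConfig ha7 hc7)

theorem isSingularAndrews_alignedConfig (ha7 : a7 = a5 + a6 - a4)
    (hc1 : c1 ^ 2 + s1 ^ 2 = 1) (hc2 : c2 ^ 2 + s2 ^ 2 = 1) (hc3 : c3 ^ 2 + s3 ^ 2 = 1)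
    (hc7 : c7 ^ 2 + s7 ^ 2 = 1)
    (hx : a1 * c1 - a2 * (c1 * c2 - s1 * s2) = b1 + a3 * s3)
    (hy : a1 * s1 - a2 * (s1 * c2 + c1 * s2) = b2 - a3 * c3)
    (he1 : (a4 - a5) * s7 + a3 * s3 + b1 - w1 = 0)
    (he2 : (a5 - a4) * c7 - a3 * c3 + b2 - w2 = 0) :
    IsSingularAndrews a1 a2 a3 a4 a5 a6 a7 b1 b2 w1 w2
      (alignedConfig c1 s1 c2 s2 c3 s3 c7 s7) := by
  refine ⟨?_, rank_jacobian_andrewsP_alignedConfig_lt ha7 hc7⟩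
  funext i
  fin_cases i <;>
    simp only [andrewsP, alignedConfig, Fin.isValue, Fin.zero_eta, Fin.mk_one, Fin.reduceFinMk,
      cons_val, Pi.zero_apply] <;>
    grind

end Andrews

theorem exists_two_singular_points_general (a1 a2 a3 a4 a5 a6 a7 b1 b2 w1 w2 : ℝ)
    (ha7 : a7 = a5 + a6 - a4)
    (hex : ∃ c3 s3 c7 s7 : ℝ,
      c3 ^ 2 + s3 ^ 2 = 1 ∧ c7 ^ 2 + s7 ^ 2 = 1 ∧
      (a4 - a5) * s7 + a3 * s3 + b1 - w1 = 0 ∧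
      (a5 - a4) * c7 - a3 * c3 + b2 - w2 = 0 ∧
      ((a1 + a2) ^ 2 - (a3 ^ 2 + 2 * a3 * b1 * s3 - 2 * a3 * b2 * c3 + b1 ^ 2 + b2 ^ 2)) *
        (4 * a1 * a2 -
          ((a1 + a2) ^ 2 -
            (a3 ^ 2 + 2 * a3 * b1 * s3 - 2 * a3 * b2 * c3 + b1 ^ 2 + b2 ^ 2))) > 0) :
    ∃ x y : Fin 14 → ℝ, x ≠ y ∧
      IsSingularAndrews a1 a2 a3 a4 a5 a6 a7 b1 b2 w1 w2 x ∧
      IsSingularAndrews a1 a2 a3 a4 a5 a6 a7 b1 b2 w1 w2 y := by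
  obtain ⟨c3, s3, c7, s7, hc3, hc7, he1, he2, hpos⟩ := hex
  have hd0 : a3 ^ 2 + 2 * a3 * b1 * s3 - 2 * a3 * b2 * c3 + b1 ^ 2 + b2 ^ 2 =
      (b1 + a3 * s3) ^ 2 + (b2 - a3 * c3) ^ 2 := by
    linear_combination -a3 ^ 2 * hc3
  rw [hd0] at hpos
  obtain ⟨c2, s2, hc2, hs2, hlen⟩ := exists_elbow_of_mul_pos hpos
  obtain ⟨c1, s1, hc1, hx, hy⟩ := exists_dyad_pose hs2 hlen
  have hlen' : (a1 - a2 * c2) ^ 2 + (a2 * -s2) ^ 2 = (b1 + a3 * s3) ^ 2 + (b2 - a3 * c3) ^ 2 := by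
    rwa [mul_neg, neg_sq]
  obtain ⟨c1', s1', hc1', hx', hy'⟩ := exists_dyad_pose (by rwa [mul_neg, neg_ne_zero]) hlen'
  refine ⟨alignedConfig c1 s1 c2 s2 c3 s3 c7 s7, alignedConfig c1' s1' c2 (-s2) c3 s3 c7 s7,
    fun h => ?_, isSingularAndrews_alignedConfig ha7 hc1 hc2 hc3 hc7 hx hy he1 he2,
    isSingularAndrews_alignedConfig ha7 hc1' (by rwa [neg_sq]) hc3 hc7 hx' hy' he1 he2⟩
  have h3 : s2 = -s2 := congrFun h 3
  exact right_ne_zero_of_mul hs2 (by linarith)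

/-- Theorem 1 of the paper (case `T5`): under the stated parameter conditions,
with `a7 = a5 + a6 - a4`, the Andrews system has at least 2 distinct singular
configurations. -/
theorem exists_two_singular_points (a1 a2 a3 a4 a5 a6 a7 b1 b2 w1 w2 : ℝ)
    (h1 : a1 > 0) (h2 : a2 > 0) (h3 : a3 > 0) (h4 : a4 > 0)
    (h5 : a5 > 0) (h6 : a6 > 0) (h7 : a7 > 0)
    (ha7 : a7 = a5 + a6 - a4) (h45 : a4 ≠ a5) (h12 : a1 ≠ a2) (hb2w2 : b2 ≠ w2)
    (hex : ∃ c3 s3 c7 s7 : ℝ,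
      c3 ^ 2 + s3 ^ 2 = 1 ∧ c7 ^ 2 + s7 ^ 2 = 1 ∧
      (a4 - a5) * s7 + a3 * s3 + b1 - w1 = 0 ∧
      (a5 - a4) * c7 - a3 * c3 + b2 - w2 = 0 ∧
      ((a1 + a2) ^ 2 - (a3 ^ 2 + 2 * a3 * b1 * s3 - 2 * a3 * b2 * c3 + b1 ^ 2 + b2 ^ 2)) *
        (4 * a1 * a2 -
          ((a1 + a2) ^ 2 -
            (a3 ^ 2 + 2 * a3 * b1 * s3 - 2 * a3 * b2 * c3 + b1 ^ 2 + b2 ^ 2))) > 0) :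
    ∃ x y : Fin 14 → ℝ, x ≠ y ∧
      IsSingularAndrews a1 a2 a3 a4 a5 a6 a7 b1 b2 w1 w2 x ∧
      IsSingularAndrews a1 a2 a3 a4 a5 a6 a7 b1 b2 w1 w2 y :=
  exists_two_singular_points_general a1 a2 a3 a4 a5 a6 a7 b1 b2 w1 w2 ha7 hex
end

section
/- Fix real parameters a3, a6, a7, b1, b2, w1, w2 and write |b-w|^2 = (b1-w1)^2 + (b2-w2)^2. If x ∈ ℝ^6 is a singular configuration of the subsystem 367 (i.e. H(x) = 0 and the 5×6 Jacobian matrix of H at x has rank strictly less than 5), then a6·a7·c6 = 0 and z1·z2·z3·z4 = 0, where z1 = (a3-a6+a7)^2 - |b-w|^2, z2 = (a3+a6+a7)^2 - |b-w|^2, z3 = (a3+a6-a7)^2 - |b-w|^2, and z4 = (a3-a6-a7)^2 - |b-w|^2. -/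
/-- The constraint map `H : ℝ^6 → ℝ^5` of the subsystem 367, in the variables
`(c3, s3, c6, s6, c7, s7)`. -/
noncomputable def H367 (a3 a6 a7 b1 b2 w1 w2 : ℝ) (x : Fin 6 → ℝ) : Fin 5 → ℝ :=
  ![a6 * (x 2 * x 4 - x 3 * x 5) + a7 * x 5 - a3 * x 1 + w1 - b1,
    a6 * (x 3 * x 4 + x 2 * x 5) - a7 * x 4 + a3 * x 0 + w2 - b2,
    x 0 ^ 2 + x 1 ^ 2 - 1,
    x 2 ^ 2 + x 3 ^ 2 - 1,
    x 4 ^ 2 + x 5 ^ 2 - 1]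

/-!
A singular configuration carries a nonzero left null vector `v` of the Jacobian. The rows of the
three circle constraints have disjoint supports, so `d = (v₀, v₁) ≠ 0`, and eliminating the
multipliers `v₂, v₃, v₄` says that each link `aₖ eₖ` of the closed loop
`ℓ₃ + ℓ₆ + ℓ₇ = b - w` (see `link367`) is parallel to `d`. Hence every link is `± aₖ d / |d|`,
so `|b - w| = |a3 ± a6 ± a7|` is a root of one of the factors `zᵢ`. Moreover `ℓ₆ ∥ ℓ₇` forces `a6 a7 c6 = 0`, because
`conj (z₆ z₇) · (-i z₇) = -i conj z₆` is real only when `c6 = 0`.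
-/

open Matrix ComplexConjugate

theorem Matrix.exists_ne_zero_vecMul_eq_zero_of_rank_lt {m n K : Type*} [Fintype m] [Fintype n]
    [Field K] {M : Matrix m n K} (h : M.rank < Fintype.card m) : ∃ v ≠ 0, v ᵥ* M = 0 := by
  by_contra! hv
  refine h.ne (LinearIndependent.rank_matrix (Fintype.linearIndependent_iff.2 fun g hg => ?_))
  by_contra! hg0
  exact hv g (funext_iff.not.2 (by simpa using hg0)) (by rwa [vecMul_eq_sum])

theorem jacobian_H367 (a3 a6 a7 b1 b2 w1 w2 : ℝ) (x : Fin 6 → ℝ) :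
    jacobian (H367 a3 a6 a7 b1 b2 w1 w2) x =
    !![0, -a3, a6 * x 4, -(a6 * x 5), a6 * x 2, a7 - a6 * x 3;
       a3, 0, a6 * x 5, a6 * x 4, a6 * x 3 - a7, a6 * x 2;
       2 * x 0, 2 * x 1, 0, 0, 0, 0;
       0, 0, 2 * x 2, 2 * x 3, 0, 0;
       0, 0, 0, 0, 2 * x 4, 2 * x 5] := by
  ext i j
  fin_cases i <;> fin_cases j <;>
    simp (disch := fun_prop) [jacobian, H367, fderiv_fun_add, fderiv_fun_sub, fderiv_fun_mul,
      fderiv_fun_pow, (hasFDerivAt_apply _ _).fderiv, Pi.single_apply, neg_add_eq_sub]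

namespace Complex

theorem eq_or_eq_neg_of_im_conj_mul_eq_zero {n e : ℂ} (hn : normSq n = 1) (he : normSq e = 1)
    (h : (conj n * e).im = 0) : e = n ∨ e = -n := by
  simp only [mul_im, conj_re, conj_im, normSq_apply] at h hn he
  -- `c := ⟨n, e⟩` satisfies `c ^ 2 = |n|² |e|² - (n × e)² = 1`, and `e = c n`.
  have hc : (n.re * e.re + n.im * e.im - 1) * (n.re * e.re + n.im * e.im + 1) = 0 := by
    linear_combination (e.re * e.re + e.im * e.im) * hn + he - (n.re * e.im - n.im * e.re) * h
  rcases mul_eq_zero.1 hc with hc | hc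
  · left
    apply Complex.ext
    · linear_combination n.re * hc - e.re * hn - n.im * h
    · linear_combination n.im * hc - e.im * hn + n.re * h
  · right
    apply Complex.ext
    · rw [neg_re]; linear_combination n.re * hc - e.re * hn - n.im * h
    · rw [neg_im]; linear_combination n.im * hc - e.im * hn + n.re * h

theorem im_conj_mul_eq_zero_of_im_conj_mul_eq_zero {d u w : ℂ} (hd : d ≠ 0)
    (hu : (conj d * u).im = 0) (hw : (conj d * w).im = 0) : (conj u * w).im = 0 := by
  have key : normSq d * (conj u * w).im =
      (conj d * u).re * (conj d * w).im - (conj d * u).im * (conj d * w).re := by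
    simp only [mul_im, mul_re, conj_re, conj_im, normSq_apply]; ring
  rw [hu, hw, mul_zero, zero_mul, sub_zero] at key
  exact (mul_eq_zero.1 key).resolve_left (normSq_pos.2 hd).ne'

theorem exists_sign_mul_eq_of_im_conj_mul_eq_zero {n e : ℂ} {a : ℝ} (hn : normSq n = 1)
    (he : normSq e = 1) (h : (conj n * (a * e)).im = 0) :
    ∃ σ : ℝ, (σ = 1 ∨ σ = -1) ∧ (a : ℂ) * e = (σ * a : ℝ) * n := by
  by_cases ha : a = 0
  · exact ⟨1, Or.inl rfl, by simp [ha]⟩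
  rw [mul_left_comm, im_ofReal_mul, mul_eq_zero, or_iff_right ha] at h
  rcases eq_or_eq_neg_of_im_conj_mul_eq_zero hn he h with rfl | rfl
  · exact ⟨1, Or.inl rfl, by push_cast; ring⟩
  · exact ⟨-1, Or.inr rfl, by push_cast; ring⟩

theorem exists_signs_normSq_sum_eq {ι : Type*} [Fintype ι] {d : ℂ} {a : ι → ℝ} {e : ι → ℂ}
    (hd : d ≠ 0) (he : ∀ i, normSq (e i) = 1) (h : ∀ i, (conj d * (a i * e i)).im = 0) :
    ∃ σ : ι → ℝ, (∀ i, σ i = 1 ∨ σ i = -1) ∧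
      normSq (∑ i, (a i : ℂ) * e i) = (∑ i, σ i * a i) ^ 2 := by
  set n := d / (‖d‖ : ℂ) with hn_def
  have hn : normSq n = 1 := by
    rw [normSq_div, normSq_ofReal, ← sq, ← normSq_eq_norm_sq, div_self (normSq_pos.2 hd).ne']
  have hpar : ∀ i, (conj n * (a i * e i)).im = 0 := fun i => by
    rw [hn_def, map_div₀, conj_ofReal, div_mul_eq_mul_div, div_ofReal_im, h i, zero_div]
  choose σ hσ hσe using fun i => exists_sign_mul_eq_of_im_conj_mul_eq_zero hn (he i) (hpar i)
  refine ⟨σ, hσ, ?_⟩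
  rw [Finset.sum_congr rfl fun i _ => hσe i, ← Finset.sum_mul, normSq_mul, hn, mul_one,
    ← ofReal_sum, normSq_ofReal, sq]

end Complex

theorem prod_sq_sub_sq_signed_sum_eq_zero {a b c σ τ ρ : ℝ} (hσ : σ = 1 ∨ σ = -1)
    (hτ : τ = 1 ∨ τ = -1) (hρ : ρ = 1 ∨ ρ = -1) :
    ((a - b + c) ^ 2 - (σ * a + τ * b + ρ * c) ^ 2) *
      ((a + b + c) ^ 2 - (σ * a + τ * b + ρ * c) ^ 2) *
      ((a + b - c) ^ 2 - (σ * a + τ * b + ρ * c) ^ 2) *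
      ((a - b - c) ^ 2 - (σ * a + τ * b + ρ * c) ^ 2) = 0 := by
  rcases hσ with rfl | rfl <;> rcases hτ with rfl | rfl <;> rcases hρ with rfl | rfl <;> ring

open Complex

/-- With `zₖ = cₖ + i sₖ`, the links of the loop `H367 = 0` are `a3 (i z₃)`, `a6 (z₆ z₇)` and
`a7 (-i z₇)`. -/
def link367 (x : Fin 6 → ℝ) : Fin 3 → ℂ :=
  ![⟨-x 1, x 0⟩, ⟨x 2 * x 4 - x 3 * x 5, x 3 * x 4 + x 2 * x 5⟩, ⟨x 5, -x 4⟩]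

section H367

variable {a3 a6 a7 b1 b2 w1 w2 : ℝ} {x : Fin 6 → ℝ}

theorem normSq_link367 (hH : H367 a3 a6 a7 b1 b2 w1 w2 x = 0) (i : Fin 3) :
    normSq (link367 x i) = 1 := by
  have hu3 : x 0 ^ 2 + x 1 ^ 2 - 1 = 0 := congrFun hH 2
  have hu6 : x 2 ^ 2 + x 3 ^ 2 - 1 = 0 := congrFun hH 3
  have hu7 : x 4 ^ 2 + x 5 ^ 2 - 1 = 0 := congrFun hH 4
  fin_cases i <;> simp only [link367, Fin.zero_eta, Fin.mk_one, Fin.reduceFinMk, cons_val_zero,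
    cons_val_one, cons_val, normSq_mk]
  · linear_combination hu3
  · linear_combination (x 4 ^ 2 + x 5 ^ 2) * hu6 + hu7
  · linear_combination hu7

theorem sum_link367 (hH : H367 a3 a6 a7 b1 b2 w1 w2 x = 0) :
    ∑ i, (![a3, a6, a7] i : ℂ) * link367 x i = ⟨b1 - w1, b2 - w2⟩ := by
  have h1 : a6 * (x 2 * x 4 - x 3 * x 5) + a7 * x 5 - a3 * x 1 + w1 - b1 = 0 := congrFun hH 0
  have h2 : a6 * (x 3 * x 4 + x 2 * x 5) - a7 * x 4 + a3 * x 0 + w2 - b2 = 0 := congrFun hH 1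
  apply Complex.ext <;> simp only [Fin.sum_univ_three, link367, cons_val_zero, cons_val_one,
    cons_val, add_re, add_im, mul_re, mul_im, ofReal_re, ofReal_im]
  · linear_combination h1
  · linear_combination h2

theorem exists_ne_zero_forall_im_conj_mul_link367_eq_zero (hH : H367 a3 a6 a7 b1 b2 w1 w2 x = 0)
    (hrank : (jacobian (H367 a3 a6 a7 b1 b2 w1 w2) x).rank < 5) :
    ∃ d : ℂ, d ≠ 0 ∧ ∀ i, (conj d * (![a3, a6, a7] i * link367 x i)).im = 0 := by
  obtain ⟨v, hv0, hv⟩ := Matrix.exists_ne_zero_vecMul_eq_zero_of_rank_lt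
    (hrank.trans_eq (Fintype.card_fin 5).symm)
  obtain ⟨hc3, hs3, hc6, hs6, hc7, hs7⟩ :
      v 1 * a3 + v 2 * (2 * x 0) = 0 ∧ -(v 0 * a3) + v 2 * (2 * x 1) = 0 ∧
      v 0 * (a6 * x 4) + v 1 * (a6 * x 5) + v 3 * (2 * x 2) = 0 ∧
      -(v 0 * (a6 * x 5)) + v 1 * (a6 * x 4) + v 3 * (2 * x 3) = 0 ∧
      v 0 * (a6 * x 2) + v 1 * (a6 * x 3 - a7) + v 4 * (2 * x 4) = 0 ∧
      v 0 * (a7 - a6 * x 3) + v 1 * (a6 * x 2) + v 4 * (2 * x 5) = 0 := by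
    rw [jacobian_H367] at hv
    simp only [funext_iff, Fin.forall_fin_succ] at hv
    simpa [vecMul, dotProduct, Fin.sum_univ_five] using hv
  have hu3 : x 0 ^ 2 + x 1 ^ 2 - 1 = 0 := congrFun hH 2
  have hu6 : x 2 ^ 2 + x 3 ^ 2 - 1 = 0 := congrFun hH 3
  have hu7 : x 4 ^ 2 + x 5 ^ 2 - 1 = 0 := congrFun hH 4
  refine ⟨⟨v 0, v 1⟩, fun hd => hv0 ?_, fun i => ?_⟩
  · obtain ⟨h0, h1⟩ : v 0 = 0 ∧ v 1 = 0 := by simpa [Complex.ext_iff] using hd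
    simp only [h0, h1] at hc3 hs3 hc6 hs6 hc7 hs7
    have h2 : v 2 = 0 := by linear_combination (x 0 / 2) * hc3 + (x 1 / 2) * hs3 - v 2 * hu3
    have h3 : v 3 = 0 := by linear_combination (x 2 / 2) * hc6 + (x 3 / 2) * hs6 - v 3 * hu6
    have h4 : v 4 = 0 := by linear_combination (x 4 / 2) * hc7 + (x 5 / 2) * hs7 - v 4 * hu7
    ext i
    fin_cases i <;> assumption
  -- Eliminating the multipliers `v 2, v 3, v 4` leaves the derivatives along the three angles.
  fin_cases i <;> simp only [link367, Fin.zero_eta, Fin.mk_one, Fin.reduceFinMk, cons_val_zero,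
    cons_val_one, cons_val, mul_re, mul_im, conj_re, conj_im, ofReal_re, ofReal_im]
  · linear_combination x 1 * hc3 - x 0 * hs3
  · linear_combination x 3 * hc6 - x 2 * hs6
  · linear_combination x 2 * hs6 - x 3 * hc6 + x 5 * hc7 - x 4 * hs7

end H367

/-- At every singular configuration of the subsystem 367 one has
`a6*a7*c6 = 0` and `z1*z2*z3*z4 = 0`. -/
theorem singular367_product_eq_zero (a3 a6 a7 b1 b2 w1 w2 : ℝ) (x : Fin 6 → ℝ)
    (hH : H367 a3 a6 a7 b1 b2 w1 w2 x = 0)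
    (hrank : (jacobian (H367 a3 a6 a7 b1 b2 w1 w2) x).rank < 5) :
    a6 * a7 * x 2 = 0 ∧
    ((a3 - a6 + a7) ^ 2 - ((b1 - w1) ^ 2 + (b2 - w2) ^ 2)) *
      ((a3 + a6 + a7) ^ 2 - ((b1 - w1) ^ 2 + (b2 - w2) ^ 2)) *
      ((a3 + a6 - a7) ^ 2 - ((b1 - w1) ^ 2 + (b2 - w2) ^ 2)) *
      ((a3 - a6 - a7) ^ 2 - ((b1 - w1) ^ 2 + (b2 - w2) ^ 2)) = 0 := by
  obtain ⟨d, hd, hpar⟩ := exists_ne_zero_forall_im_conj_mul_link367_eq_zero hH hrank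
  constructor
  · have h67 := im_conj_mul_eq_zero_of_im_conj_mul_eq_zero hd (hpar 1) (hpar 2)
    have hu7 : x 4 ^ 2 + x 5 ^ 2 - 1 = 0 := congrFun hH 4
    simp only [link367, cons_val_zero, cons_val_one, cons_val, map_mul, conj_ofReal, mul_re,
      mul_im, conj_re, conj_im, ofReal_re, ofReal_im] at h67
    linear_combination -h67 - a6 * a7 * x 2 * hu7
  · obtain ⟨σ, hσ, hnorm⟩ := exists_signs_normSq_sum_eq hd (normSq_link367 hH) hpar
    rw [sum_link367 hH, normSq_mk, Fin.sum_univ_three] at hnorm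
    simp only [cons_val_zero, cons_val_one, cons_val] at hnorm
    rw [sq (b1 - w1), sq (b2 - w2), hnorm]
    exact prod_sq_sub_sq_signed_sum_eq_zero (hσ 0) (hσ 1) (hσ 2)
end

section
/- Fix real parameters a4, a5, a6, a7 and reals c7, s7 with c7^2 + s7^2 = 1. Every real solution (c4, s4, c5, s5) of the system L2 satisfies 2*a4*a5*s4 = (a6-a7)^2 - a4^2 - a5^2 and 4*a4^2*a5^2*c4^2 = -t5*t6*t7*t8, where t5 = a4-a5+a6-a7, t6 = a4-a5-a6+a7, t7 = a4+a5-a6+a7, t8 = a4+a5+a6-a7. In particular, if L2 has a real solution then t5*t6*t7*t8 ≤ 0. -/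
/-- The system `L2` in the variables `(c4, s4, c5, s5)`. -/
def L2 (a4 a5 a6 a7 c7 s7 c4 s4 c5 s5 : ℝ) : Prop :=
  a4 * (s4 * c5 + c4 * s5) + a5 * c5 + (a6 - a7) * s7 = 0 ∧
  a4 * (c4 * c5 - s4 * s5) - a5 * s5 + (a6 - a7) * c7 = 0 ∧
  c4 ^ 2 + s4 ^ 2 = 1 ∧ c5 ^ 2 + s5 ^ 2 = 1

/-- Every real solution of `L2` satisfies `2*a4*a5*s4 = (a6-a7)^2 - a4^2 - a5^2`
and `4*a4^2*a5^2*c4^2 = -t5*t6*t7*t8`; in particular, if `L2` has a real solution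
then `t5*t6*t7*t8 ≤ 0`. -/
theorem L2_solution_relations (a4 a5 a6 a7 c7 s7 : ℝ)
    (h7 : c7 ^ 2 + s7 ^ 2 = 1) :
    (∀ c4 s4 c5 s5 : ℝ, L2 a4 a5 a6 a7 c7 s7 c4 s4 c5 s5 →
      2 * a4 * a5 * s4 = (a6 - a7) ^ 2 - a4 ^ 2 - a5 ^ 2 ∧
      4 * a4 ^ 2 * a5 ^ 2 * c4 ^ 2 =
        -((a4 - a5 + a6 - a7) * (a4 - a5 - a6 + a7) *
          (a4 + a5 - a6 + a7) * (a4 + a5 + a6 - a7))) ∧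
    ((∃ c4 s4 c5 s5 : ℝ, L2 a4 a5 a6 a7 c7 s7 c4 s4 c5 s5) →
      (a4 - a5 + a6 - a7) * (a4 - a5 - a6 + a7) *
        (a4 + a5 - a6 + a7) * (a4 + a5 + a6 - a7) ≤ 0) := by
  have main : ∀ c4 s4 c5 s5 : ℝ, L2 a4 a5 a6 a7 c7 s7 c4 s4 c5 s5 →
      2 * a4 * a5 * s4 = (a6 - a7) ^ 2 - a4 ^ 2 - a5 ^ 2 ∧
      4 * a4 ^ 2 * a5 ^ 2 * c4 ^ 2 =
        -((a4 - a5 + a6 - a7) * (a4 - a5 - a6 + a7) *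
          (a4 + a5 - a6 + a7) * (a4 + a5 + a6 - a7)) := by
    intro c4 s4 c5 s5 ⟨h1, h2, h3, h4⟩
    have key : 2 * a4 * a5 * s4 = (a6 - a7) ^ 2 - a4 ^ 2 - a5 ^ 2 := by
      linear_combination
        (a4 * (s4 * c5 + c4 * s5) + a5 * c5 - (a6 - a7) * s7) * h1 +
        (a4 * (c4 * c5 - s4 * s5) - a5 * s5 - (a6 - a7) * c7) * h2 -
        a4 ^ 2 * (c5 ^ 2 + s5 ^ 2) * h3 -
        (a4 ^ 2 + a5 ^ 2 + 2 * a4 * a5 * s4) * h4 + (a6 - a7) ^ 2 * h7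
    refine ⟨key, ?_⟩
    linear_combination (4 * a4 ^ 2 * a5 ^ 2) * h3 +
      (-(2 * a4 * a5 * s4 + (a6 - a7) ^ 2 - a4 ^ 2 - a5 ^ 2)) * key
  refine ⟨main, ?_⟩
  rintro ⟨c4, s4, c5, s5, h⟩
  have := (main c4 s4 c5 s5 h).2
  nlinarith [sq_nonneg c4, sq_nonneg (a4 * a5 * c4)]
end

section
/- Fix real parameters with a4 = a6 > 0 and a5 = a7 > 0. Then every point x = (c4, s4, c5, s5, c6, s6, c7, s7) ∈ ℝ^8 with Q(x) = 0 satisfies s6 = -s4 (and consequently c6 = c4 or c6 = -c4). -/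
/-- When `a4 = a6 > 0` and `a5 = a7 > 0`, every configuration of the subsystem 4567
satisfies `s6 = -s4`, and consequently `c6 = c4` or `c6 = -c4`. -/
theorem symm_case_s6_eq_neg_s4 (a4 a5 : ℝ) (h4 : a4 > 0) (h5 : a5 > 0)
    (c4 s4 c5 s5 c6 s6 c7 s7 : ℝ)
    (hQ : Q4567 a4 a5 a4 a5 ![c4, s4, c5, s5, c6, s6, c7, s7] = 0) :
    s6 = -s4 ∧ (c6 = c4 ∨ c6 = -c4) := by
  have e0 : a4 * (s4 * c5 + c4 * s5) + a5 * c5 - a4 * (c6 * c7 - s6 * s7) - a5 * s7 = 0 :=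
    congrFun hQ 0
  have e1 : a4 * (c4 * c5 - s4 * s5) - a5 * s5 + a4 * (s6 * c7 + c6 * s7) - a5 * c7 = 0 :=
    congrFun hQ 1
  have e2 : c4 ^ 2 + s4 ^ 2 - 1 = 0 := congrFun hQ 2
  have e3 : c5 ^ 2 + s5 ^ 2 - 1 = 0 := congrFun hQ 3
  have e4 : c6 ^ 2 + s6 ^ 2 - 1 = 0 := congrFun hQ 4
  have e5 : c7 ^ 2 + s7 ^ 2 - 1 = 0 := congrFun hQ 5
  have key : 2 * a4 * a5 * (s4 + s6) = 0 := by
    linear_combination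
      (a4 * (s4 * c5 + c4 * s5) + a5 * c5 + a4 * (c6 * c7 - s6 * s7) + a5 * s7) * e0 +
      (a4 * (c4 * c5 - s4 * s5) - a5 * s5 - a4 * (s6 * c7 + c6 * s7) + a5 * c7) * e1 -
      a4 ^ 2 * (c5 ^ 2 + s5 ^ 2) * e2 -
      (a4 ^ 2 + a5 ^ 2 + 2 * a4 * a5 * s4) * e3 +
      a4 ^ 2 * (c7 ^ 2 + s7 ^ 2) * e4 +
      (a4 ^ 2 + a5 ^ 2 - 2 * a4 * a5 * s6) * e5
  have hs : s6 = -s4 := by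
    have h2a : (2 : ℝ) * a4 * a5 ≠ 0 := by positivity
    have := mul_eq_zero.mp key
    rcases this with h | h
    · exact absurd h h2a
    · linarith
  refine ⟨hs, ?_⟩
  have hc : (c6 - c4) * (c6 + c4) = 0 := by
    have : s6 ^ 2 = s4 ^ 2 := by rw [hs]; ring
    nlinarith [e2, e4]
  rcases mul_eq_zero.mp hc with h | h
  · left; linarith
  · right; linarith
end

section
/- Fix real parameters with a4 = a6 > 0, a5 = a7 > 0, and a4 ≠ a5. If x = (c4, s4, c5, s5, c6, s6, c7, s7) ∈ ℝ^8 satisfies Q(x) = 0 together with c6 = -c4 and s6 = -s4, then c7 = -s5 and s7 = c5. -/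
/-- When `a4 = a6 > 0`, `a5 = a7 > 0` and `a4 ≠ a5`, any configuration of the
subsystem 4567 with `c6 = -c4` and `s6 = -s4` satisfies `c7 = -s5` and `s7 = c5`. -/
theorem symm_case_c7_s7 (a4 a5 : ℝ) (h4 : a4 > 0) (h5 : a5 > 0) (hne : a4 ≠ a5)
    (c4 s4 c5 s5 c6 s6 c7 s7 : ℝ)
    (hQ : Q4567 a4 a5 a4 a5 ![c4, s4, c5, s5, c6, s6, c7, s7] = 0)
    (hc6 : c6 = -c4) (hs6 : s6 = -s4) :
    c7 = -s5 ∧ s7 = c5 := by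
  subst hc6 hs6
  have h0 : a4 * (s4 * c5 + c4 * s5) + a5 * c5 - a4 * (-c4 * c7 - -s4 * s7) - a5 * s7 = 0 :=
    congrFun hQ 0
  have h1 : a4 * (c4 * c5 - s4 * s5) - a5 * s5 + a4 * (-s4 * c7 + -c4 * s7) - a5 * c7 = 0 :=
    congrFun hQ 1
  have h2 : c4 ^ 2 + s4 ^ 2 - 1 = 0 := congrFun hQ 2
  have hs4 : s4 ^ 2 ≤ 1 := by nlinarith [sq_nonneg c4]
  have hD : a4 ^ 2 + 2 * a4 * a5 * s4 + a5 ^ 2 > 0 := by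
    have h1' : s4 ≥ -1 := by nlinarith
    have hne' : a4 - a5 ≠ 0 := sub_ne_zero.mpr hne
    have hp : (a4 - a5) ^ 2 > 0 := by positivity
    nlinarith [mul_nonneg (mul_nonneg h4.le h5.le) (by linarith : (0:ℝ) ≤ 1 + s4)]
  have hD' : a4 ^ 2 + 2 * a4 * a5 * s4 + a5 ^ 2 ≠ 0 := ne_of_gt hD
  have hu : c5 - s7 = 0 := by
    have key : (a4 ^ 2 + 2 * a4 * a5 * s4 + a5 ^ 2) * (c5 - s7) = 0 := by
      linear_combination (a4 * s4 + a5) * h0 + (a4 * c4) * h1 - a4 ^ 2 * (c5 - s7) * h2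
    exact (mul_eq_zero.mp key).resolve_left hD'
  have hv : s5 + c7 = 0 := by
    have key : (a4 ^ 2 + 2 * a4 * a5 * s4 + a5 ^ 2) * (s5 + c7) = 0 := by
      linear_combination (a4 * c4) * h0 - (a4 * s4 + a5) * h1 - a4 ^ 2 * (s5 + c7) * h2
    exact (mul_eq_zero.mp key).resolve_left hD'
  constructor <;> linarith
end

section
/- Fix real parameters with a4 = a6 > 0, a5 = a7 > 0, and a4 ≠ a5. Suppose x = (c4, s4, c5, s5, c6, s6, c7, s7) and x' = (c4, s4, c5, s5, c6, s6, c7', s7') both satisfy Q = 0 with c6 = c4 and s6 = -s4 (i.e. the two points agree in all coordinates except possibly (c7, s7)). Then c7 = c7' and s7 = s7'; in other words, (c7, s7) is uniquely determined by (c4, s4, c5, s5). -/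
/-- When `a4 = a6 > 0`, `a5 = a7 > 0` and `a4 ≠ a5`, in the case `c6 = c4`,
`s6 = -s4`, the pair `(c7, s7)` is uniquely determined by `(c4, s4, c5, s5)`. -/
theorem symm_case_c7_s7_unique (a4 a5 : ℝ) (h4 : a4 > 0) (h5 : a5 > 0) (hne : a4 ≠ a5)
    (c4 s4 c5 s5 c6 s6 c7 s7 c7' s7' : ℝ)
    (hQ : Q4567 a4 a5 a4 a5 ![c4, s4, c5, s5, c6, s6, c7, s7] = 0)
    (hQ' : Q4567 a4 a5 a4 a5 ![c4, s4, c5, s5, c6, s6, c7', s7'] = 0)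
    (hc6 : c6 = c4) (hs6 : s6 = -s4) :
    c7 = c7' ∧ s7 = s7' := by
  have e1 : a4 * (s4 * c5 + c4 * s5) + a5 * c5 - a4 * (c6 * c7 - s6 * s7) - a5 * s7 = 0 :=
    congrFun hQ 0
  have e2 : a4 * (c4 * c5 - s4 * s5) - a5 * s5 + a4 * (s6 * c7 + c6 * s7) - a5 * c7 = 0 :=
    congrFun hQ 1
  have e5 : c6 ^ 2 + s6 ^ 2 - 1 = 0 := congrFun hQ 4
  have e1' : a4 * (s4 * c5 + c4 * s5) + a5 * c5 - a4 * (c6 * c7' - s6 * s7') - a5 * s7' = 0 :=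
    congrFun hQ' 0
  have e2' : a4 * (c4 * c5 - s4 * s5) - a5 * s5 + a4 * (s6 * c7' + c6 * s7') - a5 * c7' = 0 :=
    congrFun hQ' 1
  -- nonzero determinant
  have hdet : (a4 * c6) ^ 2 + (a4 * s6 - a5) ^ 2 ≠ 0 := by
    intro h
    have hc : a4 * c6 = 0 := by nlinarith [sq_nonneg (a4 * c6), sq_nonneg (a4 * s6 - a5)]
    have hs : a4 * s6 - a5 = 0 := by nlinarith [sq_nonneg (a4 * c6), sq_nonneg (a4 * s6 - a5)]
    have hc6' : c6 = 0 := by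
      rcases mul_eq_zero.mp hc with h | h
      · exact absurd h (ne_of_gt h4)
      · exact h
    have hs6' : s6 ^ 2 = 1 := by nlinarith
    have : a4 ^ 2 = a5 ^ 2 := by nlinarith
    have : a4 = a5 := by nlinarith
    exact hne this
  have key1 : ((a4 * c6) ^ 2 + (a4 * s6 - a5) ^ 2) * (c7 - c7') = 0 := by
    linear_combination (-(a4 * c6)) * (e1 - e1') + (a4 * s6 - a5) * (e2 - e2')
  have key2 : ((a4 * c6) ^ 2 + (a4 * s6 - a5) ^ 2) * (s7 - s7') = 0 := by
    linear_combination (a4 * s6 - a5) * (e1 - e1') + (a4 * c6) * (e2 - e2')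
  constructor
  · have := (mul_eq_zero.mp key1).resolve_left hdet
    linarith
  · have := (mul_eq_zero.mp key2).resolve_left hdet
    linarith
end
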